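/- arXiv:2502.02155 — 3 statements merged into one kernel-verified Lean document; each statement's English description precedes it below -/
import Mathlib

section
/- Let d ≥ 1 and Δ ≥ 1 be integers and let G be an ordered d-degenerate graph on n vertices with maximum degree at most Δ. For all positive integers n' and χ, setting s = ⌈log χ⌉ and D = 8χ²n', we have R_<(G, K^<_χ(n')) ≤ 2^{s²d+s} · Δ^s · n^s · D^{ds+1}. -/
/-- A copy of the ordered graph `G` on `[m]` in color `b` in the coloring `c` of the edges of
the complete graph on `[N]` (a pair `{a, b}` with `a < b` has color `c a b`). -/
def HasOrdCopy {m N : ℕ} (G : SimpleGraph (Fin m)) (c : Fin N → Fin N → Bool) (b : Bool) : Prop :=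
  ∃ f : Fin m → Fin N, StrictMono f ∧ ∀ i j : Fin m, i < j → G.Adj i j → c (f i) (f j) = b

/-- The ordered Ramsey number `R_<(G, H)`: red is `true`, blue is `false`. -/
noncomputable def ordRamsey {m m' : ℕ} (G : SimpleGraph (Fin m)) (H : SimpleGraph (Fin m')) : ℕ :=
  sInf {N | ∀ c : Fin N → Fin N → Bool, HasOrdCopy G c true ∨ HasOrdCopy H c false}

/-- `G` is `d`-degenerate: every nonempty (induced) subgraph has a vertex of degree at most `d`. -/
def DegenerateLE {n : ℕ} (G : SimpleGraph (Fin n)) (d : ℕ) : Prop :=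
  ∀ s : Set (Fin n), s.Nonempty → ∃ v ∈ s, (s ∩ G.neighborSet v).ncard ≤ d

/-- The ordered complete `χ`-partite graph `K^<_χ(m)` on `[χ·m]`, whose parts are the `χ`
consecutive intervals of length `m`. -/
def intervalMultipartite (χ m : ℕ) : SimpleGraph (Fin (χ * m)) :=
  SimpleGraph.fromRel (fun i j => (i : ℕ) / m ≠ (j : ℕ) / m)

set_option maxHeartbeats 1000000

/-- symmetrized color -/
def csym {N : ℕ} (c : Fin N → Fin N → Bool) (x y : Fin N) : Bool := if x < y then c x y else c y x

lemma csym_lt {N : ℕ} (c : Fin N → Fin N → Bool) {x y : Fin N} (h : x < y) : csym c x y = c x y := if_pos h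

lemma csym_gt {N : ℕ} (c : Fin N → Fin N → Bool) {x y : Fin N} (h : y < x) : csym c x y = c y x := if_neg (by omega)

lemma imp_adj {t m : ℕ} {i j : Fin (t*m)} :
    (intervalMultipartite t m).Adj i j ↔ (i:ℕ) ≠ (j:ℕ) ∧ (i:ℕ)/m ≠ (j:ℕ)/m := by
  constructor
  · rintro h
    rw [intervalMultipartite, SimpleGraph.fromRel_adj] at h
    exact ⟨fun hv => h.1 (Fin.ext hv), h.2.elim id Ne.symm⟩
  · rintro ⟨h1, h2⟩
    rw [intervalMultipartite, SimpleGraph.fromRel_adj]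
    exact ⟨fun hv => h1 (by rw [hv]), Or.inl h2⟩

lemma blue_one {n' N : ℕ} (hn' : 0 < n') (c : Fin N → Fin N → Bool) (h : n' ≤ N) :
    HasOrdCopy (intervalMultipartite 1 n') c false := by
  refine ⟨fun i => ⟨i, by have := i.2; omega⟩, fun a b hab => by simpa using hab, ?_⟩
  intro i j hij hadj
  rw [imp_adj] at hadj
  have hi : (i:ℕ) < n' := by have := i.2; omega
  have hj : (j:ℕ) < n' := by have := j.2; omega
  exact absurd (by rw [Nat.div_eq_of_lt hi, Nat.div_eq_of_lt hj]) hadj.2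

lemma div_shift {n' a : ℕ} (hn' : 0 < n') {m : ℕ} (h : a * n' ≤ m) : m / n' = (m - a * n') / n' + a := by
  conv_lhs => rw [show m = (m - a*n') + a * n' from by omega]
  rw [Nat.add_mul_div_right _ _ hn']

/-- gluing two blue copies -/
lemma glue {n' a b N : ℕ} (hn' : 0 < n') (c : Fin N → Fin N → Bool)
    (g₁ : Fin (a*n') → Fin N) (g₂ : Fin (b*n') → Fin N)
    (m₁ : StrictMono g₁) (m₂ : StrictMono g₂)
    (hlt : ∀ p q, g₁ p < g₂ q)
    (hb₁ : ∀ i j, i < j → (intervalMultipartite a n').Adj i j → c (g₁ i) (g₁ j) = false)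
    (hb₂ : ∀ i j, i < j → (intervalMultipartite b n').Adj i j → c (g₂ i) (g₂ j) = false)
    (hcross : ∀ p q, c (g₁ p) (g₂ q) = false) :
    HasOrdCopy (intervalMultipartite (a+b) n') c false := by
  have habn : (a+b)*n' = a*n' + b*n' := by ring
  refine ⟨fun i => if h : (i:ℕ) < a*n' then g₁ ⟨i, h⟩ else g₂ ⟨(i:ℕ) - a*n', by have := i.2; omega⟩, ?_, ?_⟩
  · intro i j hij
    have hij' : (i:ℕ) < (j:ℕ) := hij
    by_cases hi : (i:ℕ) < a*n' <;> by_cases hj : (j:ℕ) < a*n'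
    · simpa [hi, hj] using m₁ (show (⟨(i:ℕ), hi⟩ : Fin (a*n')) < ⟨(j:ℕ), hj⟩ from hij')
    · simpa [hi, hj] using hlt _ _
    · omega
    · simpa [hi, hj] using m₂ (show (⟨(i:ℕ)-a*n', _⟩ : Fin (b*n')) < ⟨(j:ℕ)-a*n', _⟩ from by simp; omega)
  · intro i j hij hadj
    rw [imp_adj] at hadj
    have hij' : (i:ℕ) < (j:ℕ) := hij
    by_cases hi : (i:ℕ) < a*n' <;> by_cases hj : (j:ℕ) < a*n'
    · simp only [dif_pos hi, dif_pos hj]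
      exact hb₁ _ _ hij' (imp_adj.2 ⟨by simpa using hadj.1, hadj.2⟩)
    · simp only [dif_pos hi, dif_neg hj]
      exact hcross _ _
    · omega
    · simp only [dif_neg hi, dif_neg hj]
      refine hb₂ _ _ (show ((i:ℕ) - a*n') < ((j:ℕ) - a*n') from by omega) (imp_adj.2 ⟨by simp; omega, ?_⟩)
      have e1 : (i:ℕ)/n' = ((i:ℕ) - a*n')/n' + a := div_shift hn' (by omega)
      have e2 : (j:ℕ)/n' = ((j:ℕ) - a*n')/n' + a := div_shift hn' (by omega)
      simp only [Fin.val_mk]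
      omega

/-- lift a copy from an induced subcoloring on a finset -/
lemma restrict_copy {m N : ℕ} (H : SimpleGraph (Fin m)) (Y : Finset (Fin N))
    (c : Fin N → Fin N → Bool) (b : Bool)
    (h : HasOrdCopy H (fun p q => c (Y.orderEmbOfFin rfl p) (Y.orderEmbOfFin rfl q)) b) :
    ∃ f : Fin m → Fin N, StrictMono f ∧ (∀ p, f p ∈ Y) ∧
      ∀ i j, i < j → H.Adj i j → c (f i) (f j) = b := by
  obtain ⟨f, hmono, hcol⟩ := h
  exact ⟨fun p => Y.orderEmbOfFin rfl (f p),
    fun p q hpq => (Y.orderEmbOfFin rfl).strictMono (hmono hpq),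
    fun p => Y.orderEmbOfFin_mem rfl (f p), fun i j hij hadj => hcol i j hij hadj⟩

noncomputable def nbr {n : ℕ} (G : SimpleGraph (Fin n)) (v : Fin n) : Finset (Fin n) :=
  @Finset.filter _ (fun j => G.Adj v j) (Classical.decPred _) Finset.univ

lemma mem_nbr {n : ℕ} {G : SimpleGraph (Fin n)} {v j : Fin n} : j ∈ nbr G v ↔ G.Adj v j := by
  simp [nbr]

lemma card_nbr_le {n Δ : ℕ} {G : SimpleGraph (Fin n)} (hmax : ∀ v : Fin n, (G.neighborSet v).ncard ≤ Δ)
    (v : Fin n) : (nbr G v).card ≤ Δ := by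
  refine le_trans (le_of_eq ?_) (hmax v)
  rw [← Set.ncard_coe_finset]
  congr 1
  ext j
  simp [nbr, SimpleGraph.neighborSet]

/-- elimination list -/
lemma elim_list {n d : ℕ} (G : SimpleGraph (Fin n)) (hdeg : DegenerateLE G d) :
    ∃ l : List (Fin n), l.Nodup ∧ l.toFinset = Finset.univ ∧
      ∀ (k : ℕ) (hk : k < l.length),
        ((l.take k).toFinset ∩ nbr G (l.get ⟨k, hk⟩)).card ≤ d := by
  suffices H : ∀ (m : ℕ) (s : Finset (Fin n)), s.card ≤ m → ∃ l : List (Fin n), l.Nodup ∧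
      l.toFinset = s ∧ ∀ (k : ℕ) (hk : k < l.length),
        ((l.take k).toFinset ∩ nbr G (l.get ⟨k, hk⟩)).card ≤ d by
    obtain ⟨l, h1, h2, h3⟩ := H n Finset.univ (by simp)
    exact ⟨l, h1, h2, h3⟩
  intro m
  induction m with
  | zero =>
    intro s hs
    refine ⟨[], by simp, by simpa using (Finset.card_eq_zero.1 (by omega)).symm, by simp⟩
  | succ m ih =>
    intro s hs
    rcases Finset.eq_empty_or_nonempty s with rfl | hne
    · exact ⟨[], by simp, by simp, by simp⟩
    · obtain ⟨v, hv, hvd⟩ := hdeg (↑s) (by simpa using hne)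
      have hvd' : (s ∩ nbr G v).card ≤ d := by
        refine le_trans (le_of_eq ?_) hvd
        rw [← Set.ncard_coe_finset]
        congr 1
        ext j
        simp [mem_nbr, SimpleGraph.neighborSet]
      obtain ⟨l', h1, h2, h3⟩ := ih (s.erase v) (by
        have := Finset.card_erase_of_mem hv; omega)
      have hvl' : v ∉ l' := by
        rw [← List.mem_toFinset, h2]
        simp
      refine ⟨l' ++ [v], ?_, ?_, ?_⟩
      · simp [List.nodup_append, h1, hvl']; exact fun a ha hav => hvl' (hav ▸ ha)
      · ext a
        simp only [List.toFinset_append, Finset.mem_union, List.mem_toFinset, List.mem_singleton,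
          ← List.mem_toFinset, h2, Finset.mem_erase, List.toFinset_cons, List.toFinset_nil]
        constructor
        · rintro (h | h)
          · simp at h; exact h.2
          · simp only [Finset.mem_insert, Finset.notMem_empty, or_false] at h
            subst h; simpa using hv
        · intro h
          by_cases hav : a = v
          · right; simpa using hav
          · left; simp [hav, h]
      · intro k hk
        have hk' : k < l'.length + 1 := by simpa using hk
        by_cases hkl : k < l'.length
        · have e1 : (l' ++ [v]).take k = l'.take k := List.take_append_of_le_length (by omega)
          have e2 : (l' ++ [v]).get ⟨k, hk⟩ = l'.get ⟨k, hkl⟩ := by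
            rw [List.get_eq_getElem, List.get_eq_getElem, List.getElem_append_left]
          rw [e1, e2]
          exact h3 k hkl
        · have hkl' : k = l'.length := by omega
          subst hkl'
          have e1 : (l' ++ [v]).take l'.length = l' := List.take_left
          have e2 : (l' ++ [v]).get ⟨l'.length, hk⟩ = v := by
            rw [List.get_eq_getElem]
            simp
          rw [e1, e2, h2]
          exact le_trans (Finset.card_le_card (Finset.inter_subset_inter
            (Finset.erase_subset v s) le_rfl)) hvd'

def itv {n : ℕ} (N B : ℕ) (i : Fin n) : Finset (Fin N) :=
  Finset.univ.filter (fun x => i.val*B ≤ x.val ∧ x.val < i.val*B+B)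

lemma mem_itv {n N B : ℕ} {i : Fin n} {x : Fin N} :
    x ∈ itv N B i ↔ i.val*B ≤ x.val ∧ x.val < i.val*B+B := by simp [itv]

lemma itv_lt {n N B : ℕ} {i j : Fin n} (hij : i < j) {x y : Fin N}
    (hx : x ∈ itv N B i) (hy : y ∈ itv N B j) : x < y := by
  rw [mem_itv] at hx hy
  have h1 : (i.val+1)*B ≤ j.val*B := Nat.mul_le_mul_right _ (by exact hij)
  have : x.val < y.val := by
    have e : (i.val+1)*B = i.val*B+B := by ring
    omega
  exact this

lemma card_itv {n N B : ℕ} (i : Fin n) (hNB : n*B ≤ N) (hN : 0 < N) :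
    B ≤ (itv N B i).card := by
  have hin : i.val + 1 ≤ n := i.2
  have hle : ∀ k, k < B → i.val*B + k < N := by
    intro k hk
    have : (i.val+1)*B ≤ n*B := Nat.mul_le_mul_right _ hin
    have e : (i.val+1)*B = i.val*B+B := by ring
    omega
  calc B = (Finset.range B).card := (Finset.card_range B).symm
  _ ≤ (itv N B i).card := by
      apply Finset.card_le_card_of_injOn (fun k => (⟨min (i.val*B + k) (N-1), by omega⟩ : Fin N))
      · intro k hk
        rw [Finset.mem_coe, Finset.mem_range] at hk
        rw [Finset.mem_coe, mem_itv]
        have := hle k hk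
        simp only [Fin.val_mk]
        omega
      · intro a ha b hb hab
        simp only [Finset.coe_range, Set.mem_Iio] at ha hb
        have ea := hle a ha
        have eb := hle b hb
        have : min (i.val*B+a) (N-1) = min (i.val*B+b) (N-1) := congrArg Fin.val hab
        omega

lemma main_induction (d Δ : ℕ) (hd : 1 ≤ d) (hΔ : 1 ≤ Δ) (n : ℕ) (G : SimpleGraph (Fin n))
    (hdeg : DegenerateLE G d) (hmax : ∀ v : Fin n, (G.neighborSet v).ncard ≤ Δ)
    (n' χ : ℕ) (hn' : 0 < n') (hχ : 0 < χ) :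
    ∀ s t, 1 ≤ t → t ≤ 2^s → t ≤ χ →
      ∀ N, 2 ^ (s*s*d+s) * Δ^s * n^s * (8*χ^2*n')^(d*s+1) ≤ N →
      ∀ c : Fin N → Fin N → Bool,
        HasOrdCopy G c true ∨ HasOrdCopy (intervalMultipartite t n') c false := by
  classical
  have hD1 : 1 ≤ 8*χ^2*n' := by nlinarith [pow_pos hχ 2]
  intro s
  induction s with
  | zero =>
    intro t ht1 ht2 htχ N hN c
    have ht : t = 1 := by simpa using (by omega : t ≤ 1 ∧ 1 ≤ t).1.antisymm (by omega)
    subst ht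
    right
    apply blue_one hn' c
    simp only [Nat.mul_zero, Nat.zero_mul, Nat.zero_add, pow_zero, pow_one, one_mul,
      Nat.mul_one] at hN
    nlinarith [pow_pos hχ 2]
  | succ s IH =>
    intro t ht1 ht2 htχ N hN c
    by_cases hn : n = 0
    · subst hn
      exact Or.inl ⟨Fin.elim0, fun a => a.elim0, fun i => i.elim0⟩
    have hn1 : 1 ≤ n := by omega
    by_cases hts : t ≤ 2^s
    · refine IH t ht1 hts htχ N (le_trans ?_ hN) c
      gcongr <;> first
        | omega
        | exact hΔ
        | exact hD1
        | nlinarith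
    by_cases hred : HasOrdCopy G c true
    · exact Or.inl hred
    right
    by_contra hnb
    -- abbreviations
    obtain ⟨h, hhdef⟩ : ∃ h, h = 2 ^ (s*s*d+s) * Δ^s * n^s * (8*χ^2*n')^(d*s+1) := ⟨_, rfl⟩
    obtain ⟨q, hqdef⟩ : ∃ q, q = 2*χ*n' := ⟨_, rfl⟩
    obtain ⟨B, hBdef⟩ : ∃ B, B = q^d * ((Δ+2)*h) := ⟨_, rfl⟩
    have hh1 : 1 ≤ h := by
      rw [hhdef]
      have : 0 < 2 ^ (s*s*d+s) * Δ^s * n^s * (8*χ^2*n')^(d*s+1) := by positivity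
      omega
    have hq1 : 1 ≤ q := by rw [hqdef]; nlinarith
    have hq2 : 2 ≤ q := by rw [hqdef]; nlinarith
    have hB1 : 1 ≤ B := by
      rw [hBdef]
      have : 0 < q^d * ((Δ+2)*h) := by positivity
      omega
    -- t split
    obtain ⟨t₂, ht₂def⟩ : ∃ t₂, t₂ = t/2 := ⟨_, rfl⟩
    obtain ⟨t₁, ht₁def⟩ : ∃ t₁, t₁ = t - t/2 := ⟨_, rfl⟩
    have h2s : 1 ≤ 2^s := Nat.one_le_two_pow
    have h2s' : 2^(s+1) = 2*2^s := by rw [pow_succ]; ring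
    have ht12 : t₁ + t₂ = t := by omega
    have ht11 : 1 ≤ t₁ := by omega
    have ht21 : 1 ≤ t₂ := by omega
    have ht1s : t₁ ≤ 2^s := by omega
    have ht2s : t₂ ≤ 2^s := by omega
    have ht1χ : t₁ ≤ χ := by omega
    have ht2χ : t₂ ≤ χ := by omega
    -- main size bound
    have hNB : n * B ≤ N := by
      have hq4 : 4*q^d ≤ (8*χ^2*n')^d := by
        rw [show 8*χ^2*n' = (4*χ)*q from by rw [hqdef]; ring, mul_pow]
        have h4 : 4 ≤ (4*χ)^d :=
          le_trans (le_trans (by norm_num : (4:ℕ) ≤ 4^1) (Nat.pow_le_pow_right (by norm_num) hd))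
            (Nat.pow_le_pow_left (by omega) d)
        exact Nat.mul_le_mul_right _ h4
      calc n * B ≤ n * (q^d * ((8*Δ)*h)) := by
              rw [hBdef]; gcongr; omega
        _ = h * (2 * Δ * n * (4*q^d)) := by ring
        _ ≤ h * (2^((2*s+1)*d+1) * Δ * n * ((8*χ^2*n')^d)) := by
              gcongr
              calc (2:ℕ) = 2^1 := by norm_num
                _ ≤ 2^((2*s+1)*d+1) := Nat.pow_le_pow_right (by norm_num) (by omega)
        _ = 2^((s+1)*(s+1)*d+(s+1)) * Δ^(s+1) * n^(s+1) * (8*χ^2*n')^(d*(s+1)+1) := by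
              rw [hhdef, show (s+1)*(s+1)*d+(s+1) = (s*s*d+s) + ((2*s+1)*d+1) from by ring,
                pow_add, pow_succ Δ, pow_succ n,
                show d*(s+1)+1 = (d*s+1)+d from by ring, pow_add]
              ring
        _ ≤ N := hN
    have hN0 : 0 < N := by nlinarith
    -- the bad set lemma
    have badlem : ∀ (W C' : Finset (Fin N)),
        ((∀ x ∈ W, ∀ y ∈ C', x < y) ∨ (∀ x ∈ W, ∀ y ∈ C', y < x)) → 2*h ≤ C'.card →
        (W.filter (fun x => q * (C'.filter (fun y => csym c x y = true)).card < C'.card)).card < h := by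
      intro W C' hside hC'
      by_contra hBad
      push_neg at hBad
      set Bad := W.filter (fun x => q * (C'.filter (fun y => csym c x y = true)).card < C'.card) with hBaddef
      have hIH1 := IH t₁ ht11 ht1s ht1χ Bad.card (by rw [← hhdef]; exact hBad)
        (fun p q => c (Bad.orderEmbOfFin rfl p) (Bad.orderEmbOfFin rfl q))
      rcases hIH1 with hr | hb
      · obtain ⟨f, hf1, _, hf3⟩ := restrict_copy G Bad c true hr
        exact hred ⟨f, hf1, hf3⟩
      obtain ⟨g, hg1, hg2, hg3⟩ := restrict_copy _ Bad c false hb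
      have hgBad : ∀ a, g a ∈ Bad := hg2
      have hgW : ∀ a, g a ∈ W := fun a => Finset.mem_of_mem_filter _ (hgBad a)
      have hgr : ∀ a, q * (C'.filter (fun y => csym c (g a) y = true)).card + 1 ≤ C'.card := by
        intro a
        have := (Finset.mem_filter.1 (hgBad a)).2
        omega
      set Y := C'.filter (fun y => ∀ a, csym c (g a) y = false) with hYdef
      have hCY : C'.card ≤ Y.card + ∑ a : Fin (t₁*n'), (C'.filter (fun y => csym c (g a) y = true)).card := by
        have hsub : C' ⊆ Y ∪ Finset.univ.biUnion
            (fun a : Fin (t₁*n') => C'.filter (fun y => csym c (g a) y = true)) := by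
          intro y hy
          by_cases hYy : ∀ a, csym c (g a) y = false
          · exact Finset.mem_union_left _ (Finset.mem_filter.2 ⟨hy, hYy⟩)
          · push_neg at hYy
            obtain ⟨a, ha⟩ := hYy
            refine Finset.mem_union_right _ (Finset.mem_biUnion.2 ⟨a, Finset.mem_univ _,
              Finset.mem_filter.2 ⟨hy, by simpa using ha⟩⟩)
        calc C'.card ≤ (Y ∪ Finset.univ.biUnion _).card := Finset.card_le_card hsub
          _ ≤ Y.card + (Finset.univ.biUnion _).card := Finset.card_union_le _ _
          _ ≤ Y.card + ∑ a : Fin (t₁*n'), (C'.filter (fun y => csym c (g a) y = true)).card := by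
              exact Nat.add_le_add_left (Finset.card_biUnion_le) _
      have hsum : 2 * (∑ a : Fin (t₁*n'), (C'.filter (fun y => csym c (g a) y = true)).card) + 1 ≤ C'.card := by
        set Sr := ∑ a : Fin (t₁*n'), (C'.filter (fun y => csym c (g a) y = true)).card with hSrdef
        have h1 : q * Sr ≤ (t₁*n') * (C'.card - 1) := by
          rw [hSrdef, Finset.mul_sum]
          calc ∑ a : Fin (t₁*n'), q * (C'.filter (fun y => csym c (g a) y = true)).card
              ≤ ∑ _a : Fin (t₁*n'), (C'.card - 1) := Finset.sum_le_sum (fun a _ => by have := hgr a; omega)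
            _ = (t₁*n') * (C'.card - 1) := by simp [Finset.sum_const, Finset.card_univ, mul_comm]
        have h2 : (t₁*n') * (C'.card - 1) ≤ (χ*n') * (C'.card-1) :=
          Nat.mul_le_mul_right _ (Nat.mul_le_mul_right _ ht1χ)
        have h3 : (χ*n') * (2*Sr) ≤ (χ*n') * (C'.card-1) := by
          calc (χ*n') * (2*Sr) = q * Sr := by rw [hqdef]; ring
            _ ≤ (χ*n') * (C'.card-1) := le_trans h1 h2
        have h4 : 2*Sr ≤ C'.card - 1 := Nat.le_of_mul_le_mul_left h3 (by positivity)
        omega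
      have hYh : h ≤ Y.card := by omega
      have hIH2 := IH t₂ ht21 ht2s ht2χ Y.card (by rw [← hhdef]; exact hYh)
        (fun p q => c (Y.orderEmbOfFin rfl p) (Y.orderEmbOfFin rfl q))
      rcases hIH2 with hr | hb2
      · obtain ⟨f, hf1, _, hf3⟩ := restrict_copy G Y c true hr
        exact hred ⟨f, hf1, hf3⟩
      obtain ⟨g₂, hg₂1, hg₂2, hg₂3⟩ := restrict_copy _ Y c false hb2
      have hg₂C' : ∀ a, g₂ a ∈ C' := fun a => Finset.mem_of_mem_filter _ (hg₂2 a)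
      have hg₂blue : ∀ p a, csym c (g a) (g₂ p) = false := by
        intro p a
        exact (Finset.mem_filter.1 (hg₂2 p)).2 a
      rcases hside with hL | hR
      · have hcopy : HasOrdCopy (intervalMultipartite (t₁+t₂) n') c false := by
          refine glue hn' c g g₂ hg1 hg₂1 (fun p q' => hL _ (hgW p) _ (hg₂C' q')) hg3 hg₂3 ?_
          intro p q'
          have hlt := hL _ (hgW p) _ (hg₂C' q')
          have := hg₂blue q' p
          rwa [csym_lt c hlt] at this
        rw [ht12] at hcopy
        exact hnb hcopy
      · have hcopy : HasOrdCopy (intervalMultipartite (t₂+t₁) n') c false := by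
          refine glue hn' c g₂ g hg₂1 hg1 (fun p q' => hR _ (hgW q') _ (hg₂C' p)) hg₂3 hg3 ?_
          intro p q'
          have hlt := hR _ (hgW q') _ (hg₂C' p)
          have := hg₂blue p q'
          rwa [csym_gt c hlt] at this
        rw [show t₂ + t₁ = t from by omega] at hcopy
        exact hnb hcopy
    -- the embedding
    obtain ⟨l, hlnd, hluniv, hlprop⟩ := elim_list G hdeg
    have hllen : l.length = n := by
      have h1 := List.toFinset_card_of_nodup hlnd
      rw [hluniv] at h1
      simpa using h1.symm
    have hsubTake : ∀ (k m : ℕ), k ≤ m → (l.take k).toFinset ⊆ (l.take m).toFinset := by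
      intro k m hkm x hx
      rw [List.mem_toFinset] at *
      have he : l.take k = (l.take m).take k := by rw [List.take_take]; congr 1; omega
      rw [he] at hx
      exact List.take_subset _ _ hx
    have hcap : ∀ (k : ℕ) (j : Fin n), j ∉ (l.take k).toFinset →
        ((l.take k).toFinset ∩ nbr G j).card ≤ d := by
      intro k j hj
      have hjl : j ∈ l := by rw [← List.mem_toFinset, hluniv]; exact Finset.mem_univ j
      obtain ⟨⟨m, hm⟩, hmj⟩ := List.mem_iff_get.1 hjl
      have hkm : k ≤ m := by
        by_contra hkm
        push_neg at hkm
        apply hj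
        rw [List.mem_toFinset]
        have he : (l.take k).get ⟨m, by rw [List.length_take]; omega⟩ = l.get ⟨m, hm⟩ := by
          rw [List.get_eq_getElem, List.get_eq_getElem, List.getElem_take]
        rw [← hmj, ← he]
        exact List.get_mem _ _
      calc ((l.take k).toFinset ∩ nbr G j).card
          ≤ ((l.take m).toFinset ∩ nbr G j).card :=
            Finset.card_le_card (Finset.inter_subset_inter (hsubTake k m hkm) le_rfl)
        _ ≤ d := by rw [← hmj]; exact hlprop m hm
    have hEMB : ∀ k, k ≤ n → ∃ (f : Fin n → Fin N) (C : Fin n → Finset (Fin N)),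
        (∀ i, C i ⊆ itv N B i) ∧
        (∀ i, i ∈ (l.take k).toFinset → f i ∈ itv N B i) ∧
        (∀ i j, i ∈ (l.take k).toFinset → j ∈ (l.take k).toFinset → i < j → G.Adj i j →
          c (f i) (f j) = true) ∧
        (∀ i, i ∈ (l.take k).toFinset → ∀ j, j ∉ (l.take k).toFinset → G.Adj i j →
          ∀ y ∈ C j, csym c (f i) y = true) ∧
        (∀ j, j ∉ (l.take k).toFinset → B ≤ q ^ (((l.take k).toFinset ∩ nbr G j).card) * (C j).card) := by
      intro k
      induction k with
      | zero =>
        intro _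
        refine ⟨fun _ => ⟨0, hN0⟩, fun i => itv N B i, fun i => le_rfl, by simp, by simp, by simp, ?_⟩
        intro j _
        simpa using card_itv j hNB hN0
      | succ k ihk =>
        intro hk1
        obtain ⟨f, C, p1, p2, p3, p4, p5⟩ := ihk (by omega)
        have hkl : k < l.length := by omega
        obtain ⟨v, hvdef⟩ : ∃ v, v = l.get ⟨k, hkl⟩ := ⟨_, rfl⟩
        have hvTk : v ∉ (l.take k).toFinset := by
          intro hvin
          rw [List.mem_toFinset] at hvin
          obtain ⟨⟨m, hm⟩, hmv⟩ := List.mem_iff_get.1 hvin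
          have hmlen : m < k := by rw [List.length_take] at hm; omega
          rw [hvdef] at hmv
          have he : l.get ⟨m, by omega⟩ = l.get ⟨k, hkl⟩ := by
            rw [← hmv]
            simp [List.get_eq_getElem, List.getElem_take]
          have := (List.Nodup.get_inj_iff hlnd).1 he
          simp at this
          omega
        have hgv : l[k] = v := by rw [hvdef, List.get_eq_getElem]
        have hTsucc : (l.take (k+1)).toFinset = insert v (l.take k).toFinset := by
          ext a
          rw [List.take_succ, List.getElem?_eq_getElem hkl]
          simp [hgv, or_comm]
        have hszlem : ∀ j, j ∉ (l.take k).toFinset → (Δ+2)*h ≤ (C j).card := by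
          intro j hj
          have he : ((l.take k).toFinset ∩ nbr G j).card ≤ d := hcap k j hj
          have h5 := p5 j hj
          have hm : q^d * ((Δ+2)*h) ≤ q^d * (C j).card := by
            calc q^d * ((Δ+2)*h) = B := hBdef.symm
              _ ≤ q ^ (((l.take k).toFinset ∩ nbr G j).card) * (C j).card := h5
              _ ≤ q^d * (C j).card := Nat.mul_le_mul_right _ (Nat.pow_le_pow_right hq1 he)
          exact Nat.le_of_mul_le_mul_left hm (by positivity)
        set U := (nbr G v) \ (l.take (k+1)).toFinset with hUdef
        have hUfacts : ∀ j ∈ U, v ≠ j ∧ G.Adj v j ∧ j ∉ (l.take (k+1)).toFinset ∧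
            j ∉ (l.take k).toFinset := by
          intro j hj
          obtain ⟨hj1, hj2⟩ := Finset.mem_sdiff.1 hj
          have hadj : G.Adj v j := mem_nbr.1 hj1
          refine ⟨?_, hadj, hj2, fun hcon => hj2 (hsubTake k (k+1) (by omega) hcon)⟩
          intro hvj
          exact hj2 (hvj ▸ (hTsucc ▸ Finset.mem_insert_self v _))
        have hUcard : U.card ≤ Δ :=
          le_trans (Finset.card_le_card Finset.sdiff_subset) (card_nbr_le hmax v)
        have hbadj : ∀ j ∈ U, ((C v).filter
            (fun x => q * ((C j).filter (fun y => csym c x y = true)).card < (C j).card)).card < h := by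
          intro j hj
          obtain ⟨hjv, hadj, hj1, hj0⟩ := hUfacts j hj
          refine badlem (C v) (C j) ?_ ?_
          · rcases lt_or_gt_of_ne hjv with hvj | hvj
            · exact Or.inl (fun x hx y hy => itv_lt hvj (p1 v hx) (p1 j hy))
            · exact Or.inr (fun x hx y hy => itv_lt hvj (p1 j hy) (p1 v hx))
          · calc 2*h ≤ (Δ+2)*h := Nat.mul_le_mul_right _ (by omega)
              _ ≤ (C j).card := hszlem j hj0
        set BadU := U.biUnion (fun j => (C v).filter
          (fun x => q * ((C j).filter (fun y => csym c x y = true)).card < (C j).card)) with hBUdef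
        have hBUcard : BadU.card ≤ Δ * (h-1) := by
          calc BadU.card ≤ ∑ j ∈ U, ((C v).filter
              (fun x => q * ((C j).filter (fun y => csym c x y = true)).card < (C j).card)).card :=
              Finset.card_biUnion_le
            _ ≤ U.card • (h-1) := Finset.sum_le_card_nsmul _ _ _
                (fun j hj => by have := hbadj j hj; omega)
            _ = U.card * (h-1) := by rw [smul_eq_mul]
            _ ≤ Δ * (h-1) := Nat.mul_le_mul_right _ hUcard
        have hCv : (Δ+2)*h ≤ (C v).card := hszlem v hvTk
        have hex : ∃ x, x ∈ C v \ BadU := by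
          have h1 : (C v).card - BadU.card ≤ ((C v) \ BadU).card := Finset.le_card_sdiff _ _
          have he : (Δ+2)*h = Δ*h + 2*h := by ring
          have h2 : Δ*(h-1) ≤ Δ*h := Nat.mul_le_mul_left _ (by omega)
          have h3 : 0 < ((C v) \ BadU).card := by omega
          exact Finset.card_pos.1 h3
        obtain ⟨x, hxmem⟩ := hex
        obtain ⟨hxCv, hxBU⟩ := Finset.mem_sdiff.1 hxmem
        set C2 : Fin n → Finset (Fin N) :=
          fun j => if j ∈ U then (C j).filter (fun y => csym c x y = true) else C j with hC2
        have hC2U : ∀ j, j ∈ U → C2 j = (C j).filter (fun y => csym c x y = true) := by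
          intro j hj
          simp only [hC2]
          rw [if_pos hj]
        have hC2N : ∀ j, j ∉ U → C2 j = C j := by
          intro j hj
          simp only [hC2]
          rw [if_neg hj]
        refine ⟨Function.update f v x, C2, ?_, ?_, ?_, ?_, ?_⟩
        · intro i
          by_cases hi : i ∈ U
          · rw [hC2U i hi]
            exact (Finset.filter_subset _ _).trans (p1 i)
          · rw [hC2N i hi]
            exact p1 i
        · intro i hi
          rw [hTsucc] at hi
          rcases Finset.mem_insert.1 hi with rfl | hi'
          · rw [Function.update_self]
            exact p1 i hxCv
          · rw [Function.update_of_ne (by rintro rfl; exact hvTk hi')]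
            exact p2 i hi'
        · intro i j hi hj hij hadj
          rw [hTsucc] at hi hj
          rcases Finset.mem_insert.1 hi with rfl | hi' <;> rcases Finset.mem_insert.1 hj with hjv | hj'
          · exact absurd (hjv ▸ hij) (lt_irrefl _)
          · rw [Function.update_self, Function.update_of_ne (by rintro rfl; exact hvTk hj')]
            have hc := p4 j hj' i hvTk hadj.symm x hxCv
            have hlt : x < f j := itv_lt hij (p1 i hxCv) (p2 j hj')
            rwa [csym_gt c hlt] at hc
          · subst hjv
            rw [Function.update_self, Function.update_of_ne (by rintro rfl; exact hvTk hi')]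
            have hc := p4 i hi' j hvTk hadj x hxCv
            have hlt : f i < x := itv_lt hij (p2 i hi') (p1 j hxCv)
            rwa [csym_lt c hlt] at hc
          · rw [Function.update_of_ne (by rintro rfl; exact hvTk hi'),
              Function.update_of_ne (by rintro rfl; exact hvTk hj')]
            exact p3 i j hi' hj' hij hadj
        · intro i hi j hj hadj y hy
          rw [hTsucc] at hi
          rcases Finset.mem_insert.1 hi with rfl | hi'
          · have hjU : j ∈ U := Finset.mem_sdiff.2 ⟨mem_nbr.2 hadj, hj⟩
            rw [hC2U j hjU] at hy
            rw [Function.update_self]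
            exact (Finset.mem_filter.1 hy).2
          · have hjTk : j ∉ (l.take k).toFinset :=
              fun hcon => hj (hsubTake k (k+1) (by omega) hcon)
            have hyC : y ∈ C j := by
              by_cases hjU : j ∈ U
              · rw [hC2U j hjU] at hy
                exact Finset.mem_of_mem_filter _ hy
              · rwa [hC2N j hjU] at hy
            rw [Function.update_of_ne (by rintro rfl; exact hvTk hi')]
            exact p4 i hi' j hjTk hadj y hyC
        · intro j hj
          have hjTk : j ∉ (l.take k).toFinset :=
            fun hcon => hj (hsubTake k (k+1) (by omega) hcon)
          by_cases hjU : j ∈ U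
          · have hadjvj : G.Adj v j := mem_nbr.1 (Finset.mem_sdiff.1 hjU).1
            have hvnbrj : v ∈ nbr G j := mem_nbr.2 hadjvj.symm
            have hinter : (l.take (k+1)).toFinset ∩ nbr G j
                = insert v ((l.take k).toFinset ∩ nbr G j) := by
              rw [hTsucc, Finset.insert_inter_of_mem hvnbrj]
            have hvnotin : v ∉ (l.take k).toFinset ∩ nbr G j :=
              fun hcon => hvTk (Finset.mem_inter.1 hcon).1
            rw [hinter, Finset.card_insert_of_notMem hvnotin, hC2U j hjU]
            have hxgood : (C j).card ≤ q * ((C j).filter (fun y => csym c x y = true)).card := by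
              by_contra hcon
              push_neg at hcon
              exact hxBU (Finset.mem_biUnion.2 ⟨j, hjU, Finset.mem_filter.2 ⟨hxCv, hcon⟩⟩)
            calc B ≤ q ^ (((l.take k).toFinset ∩ nbr G j).card) * (C j).card := p5 j hjTk
              _ ≤ q ^ (((l.take k).toFinset ∩ nbr G j).card)
                  * (q * ((C j).filter (fun y => csym c x y = true)).card) :=
                  Nat.mul_le_mul_left _ hxgood
              _ = q ^ (((l.take k).toFinset ∩ nbr G j).card + 1)
                  * ((C j).filter (fun y => csym c x y = true)).card := by
                  rw [pow_succ]; ring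
          · have hvnbrj : v ∉ nbr G j := by
              intro hcon
              exact hjU (Finset.mem_sdiff.2 ⟨mem_nbr.2 (mem_nbr.1 hcon).symm, hj⟩)
            have hinter : (l.take (k+1)).toFinset ∩ nbr G j = (l.take k).toFinset ∩ nbr G j := by
              rw [hTsucc, Finset.insert_inter_of_notMem hvnbrj]
            rw [hinter, hC2N j hjU]
            exact p5 j hjTk
    obtain ⟨f, C, p1, p2, p3, p4, p5⟩ := hEMB n le_rfl
    have hTn : (l.take n).toFinset = Finset.univ := by
      have : l.take n = l := List.take_of_length_le (by omega)
      rw [this, hluniv]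
    have hmem : ∀ i : Fin n, i ∈ (l.take n).toFinset := by
      intro i; rw [hTn]; exact Finset.mem_univ i
    have hmono : StrictMono f := fun i j hij => itv_lt hij (p2 i (hmem i)) (p2 j (hmem j))
    exact hred ⟨f, hmono, fun i j hij hadj => p3 i j (hmem i) (hmem j) hij hadj⟩

theorem stmt2 (d Δ : ℕ) (hd : 1 ≤ d) (hΔ : 1 ≤ Δ) (n : ℕ) (G : SimpleGraph (Fin n))
    (hdeg : DegenerateLE G d) (hmax : ∀ v : Fin n, (G.neighborSet v).ncard ≤ Δ)
    (n' χ : ℕ) (hn' : 0 < n') (hχ : 0 < χ) :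
    ordRamsey G (intervalMultipartite χ n') ≤
      2 ^ ((Nat.clog 2 χ) ^ 2 * d + Nat.clog 2 χ) * Δ ^ (Nat.clog 2 χ) * n ^ (Nat.clog 2 χ) *
        (8 * χ ^ 2 * n') ^ (d * Nat.clog 2 χ + 1) := by
  apply Nat.sInf_le
  intro c
  exact main_induction d Δ hd hΔ n G hdeg hmax n' χ hn' hχ (Nat.clog 2 χ) χ hχ
    (Nat.le_pow_clog one_lt_two χ) le_rfl _
    (by rw [pow_two]; ring_nf; exact le_rfl) c
end

section
/- Every 3-uniform hypergraph H on vertex set [n+1] satisfies R(H) ≤ 2^{binom(R_<(S_H), 2)} + 1, where S_H is the family of ordered graphs G on [n] such that every edge of H is an edge of T(G). -/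
/-- The ordered Ramsey number `R_<(F)` of a family `F` of ordered graphs on `[n]`: the least `N`
such that every red/blue coloring of the edges of `K_N` contains a monochromatic copy of some
member of `F`. -/
noncomputable def familyOrdRamsey {n : ℕ} (F : Set (SimpleGraph (Fin n))) : ℕ :=
  sInf {N | ∀ c : Fin N → Fin N → Bool, ∃ G ∈ F, ∃ b : Bool, HasOrdCopy G c b}

/-- The Ramsey number of a `3`-uniform hypergraph on `[m]` with edge predicate `E`: the least
`N` such that every red/blue coloring of the `3`-element subsets of `[N]` contains an injective
map of the vertices sending every edge to a set of one common color. -/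
noncomputable def hyperRamsey {m : ℕ} (E : Finset (Fin m) → Prop) : ℕ :=
  sInf {N | ∀ c : Finset (Fin N) → Bool, ∃ b : Bool,
    ∃ f : Fin m → Fin N, Function.Injective f ∧ ∀ e, E e → c (e.image f) = b}

/-- `T(G)`: the `3`-uniform hypergraph on `[n+1]` whose edges are the triples `{a, b, c}` with
`a < b < c` such that `{a, b}` is an edge of the ordered graph `G` on `[n]`. -/
def Tgraph {n : ℕ} (G : SimpleGraph (Fin n)) (e : Finset (Fin (n + 1))) : Prop :=
  ∃ a b c : Fin (n + 1), a < b ∧ b < c ∧ e = {a, b, c} ∧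
    ∃ (ha : (a : ℕ) < n) (hb : (b : ℕ) < n), G.Adj ⟨a, ha⟩ ⟨b, hb⟩
lemma strictMono_snoc {k : ℕ} {α : Type*} [Preorder α] {f : Fin k → α} {a : α}
    (hf : StrictMono f) (ha : ∀ i, f i < a) : StrictMono (Fin.snoc f a) := by
  intro i j hij
  rcases Fin.eq_castSucc_or_eq_last j with ⟨j', rfl⟩ | rfl
  · rcases Fin.eq_castSucc_or_eq_last i with ⟨i', rfl⟩ | rfl
    · simp only [Fin.snoc_castSucc]
      exact hf (Fin.castSucc_lt_castSucc_iff.mp hij)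
    · exact absurd (hij.trans (Fin.castSucc_lt_last _)) (lt_irrefl _)
  · rcases Fin.eq_castSucc_or_eq_last i with ⟨i', rfl⟩ | rfl
    · simp only [Fin.snoc_castSucc, Fin.snoc_last]
      exact ha i'
    · exact absurd hij (lt_irrefl _)

lemma lemA_aux {N R : ℕ} (c : Finset (Fin N) → Bool) (hN : 2 ^ R.choose 2 + 1 ≤ N) :
    ∀ k, k ≤ R + 1 →
    ∃ (u : Fin k → Fin N) (S : Finset (Fin N)) (d : Fin k → Fin k → Bool),
      StrictMono u ∧
      (∀ i, ∀ x ∈ S, u i < x) ∧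
      (∀ i j l : Fin k, i < j → j < l → c {u i, u j, u l} = d i j) ∧
      (∀ i j : Fin k, i < j → ∀ x ∈ S, c {u i, u j, x} = d i j) ∧
      (k ≤ R → 2 ^ (R.choose 2 - k.choose 2) ≤ S.card) ∧
      (k = 0 → 2 ^ R.choose 2 + 1 ≤ S.card) := by
  classical
  intro k
  induction k with
  | zero =>
    intro _
    refine ⟨Fin.elim0, Finset.univ, fun i => i.elim0, fun i => i.elim0, fun i => i.elim0,
      fun i => i.elim0, fun i => i.elim0, ?_, ?_⟩
    · intro _
      have h0 : Nat.choose 0 2 = 0 := rfl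
      rw [h0, Nat.sub_zero, Finset.card_univ, Fintype.card_fin]
      omega
    · intro _
      rw [Finset.card_univ, Fintype.card_fin]
      exact hN
  | succ k ih =>
    intro hk1
    obtain ⟨u, S, d, hu, hlt, hdet, hSdet, hsize, hsize0⟩ := ih (le_trans (Nat.le_succ k) hk1)
    have hkR : k ≤ R := Nat.succ_le_succ_iff.mp hk1
    have hSpos : 0 < S.card := lt_of_lt_of_le (Nat.pow_pos (by norm_num)) (hsize hkR)
    have hSne : S.Nonempty := Finset.card_pos.mp hSpos
    set m := S.min' hSne with hm
    have hmS : m ∈ S := S.min'_mem hSne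
    set T := S.erase m with hT
    have hTcard : S.card - 1 ≤ T.card := by
      rw [hT, Finset.card_erase_of_mem hmS]
    set g : Fin N → (Fin k → Bool) := fun x i => c {u i, m, x} with hg
    have key : ∃ v : Fin k → Bool,
        (k + 1 ≤ R → 2 ^ (R.choose 2 - (k+1).choose 2) ≤ (T.filter (fun x => g x = v)).card) := by
      by_cases hkR1 : k + 1 ≤ R
      · have hCk : (k+1).choose 2 = k.choose 2 + k := by
          have h := Nat.choose_succ_succ' k 1
          rw [Nat.choose_one_right] at h
          norm_num at h
          omega
        have hCle : (k+1).choose 2 ≤ R.choose 2 := Nat.choose_le_choose 2 hkR1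
        rcases Nat.eq_zero_or_pos k with rfl | hk0
        · refine ⟨fun i => i.elim0, fun _ => ?_⟩
          have hfT : T.filter (fun x => g x = fun i => i.elim0) = T :=
            Finset.filter_true_of_mem (fun x _ => funext fun i => i.elim0)
          rw [hfT]
          have h0 : 2 ^ R.choose 2 + 1 ≤ S.card := hsize0 rfl
          have he : R.choose 2 - (0+1).choose 2 = R.choose 2 := by
            have h1 : (0+1).choose 2 = 0 := rfl
            rw [h1, Nat.sub_zero]
          rw [he]
          omega
        · set e := R.choose 2 - k.choose 2 with hee
          have hek : k ≤ e := by omega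
          have hS2 : 2 ^ e ≤ S.card := hsize hkR
          have hpow : (2:ℕ) ^ k * 2 ^ (e - k) = 2 ^ e := by
            rw [← pow_add]
            congr 1
            omega
          have h2k : 2 ≤ 2 ^ k := by
            calc (2:ℕ) = 2 ^ 1 := (pow_one 2).symm
            _ ≤ 2 ^ k := Nat.pow_le_pow_right (by norm_num) hk0
          have hCA : (2:ℕ) ^ k ≤ 2 ^ e := Nat.pow_le_pow_right (by norm_num) hek
          have hmagic : (Finset.univ : Finset (Fin k → Bool)).card * (2 ^ (e - k) - 1) < T.card := by
            have hcu : (Finset.univ : Finset (Fin k → Bool)).card = 2 ^ k := by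
              simp [Finset.card_univ]
            rw [hcu]
            have hms : (2:ℕ) ^ k * (2 ^ (e-k) - 1) = 2 ^ e - 2 ^ k := by
              rw [Nat.mul_sub, hpow, mul_one]
            rw [hms]
            omega
          obtain ⟨v, -, hv⟩ := Finset.exists_lt_card_fiber_of_mul_lt_card_of_maps_to
            (f := g) (t := Finset.univ) (fun x _ => Finset.mem_univ _) hmagic
          refine ⟨v, fun _ => ?_⟩
          have heq : e - k = R.choose 2 - (k+1).choose 2 := by omega
          rw [← heq]
          omega
      · exact ⟨fun _ => false, fun h => absurd h hkR1⟩
    obtain ⟨v, hvsize⟩ := key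
    set S' := T.filter (fun x => g x = v) with hS'
    have hS'S : S' ⊆ S := (Finset.filter_subset _ _).trans (Finset.erase_subset _ _)
    have hu'mono : StrictMono (Fin.snoc u m : Fin (k+1) → Fin N) :=
      strictMono_snoc hu (fun i => hlt i m hmS)
    set d' : Fin (k+1) → Fin (k+1) → Bool :=
      Fin.snoc (fun i' : Fin k => Fin.snoc (d i') (v i')) (fun _ => false) with hd'
    have hd1 : ∀ i' j' : Fin k, d' i'.castSucc j'.castSucc = d i' j' := by
      intro i' j'
      simp [hd', Fin.snoc_castSucc]
    have hd2 : ∀ i' : Fin k, d' i'.castSucc (Fin.last k) = v i' := by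
      intro i'
      simp [hd', Fin.snoc_castSucc, Fin.snoc_last]
    refine ⟨Fin.snoc u m, S', d', hu'mono, ?_, ?_, ?_, hvsize, fun h => absurd h (Nat.succ_ne_zero k)⟩
    · -- all chosen below S'
      intro i x hx
      rcases Fin.eq_castSucc_or_eq_last i with ⟨i', rfl⟩ | rfl
      · simp only [Fin.snoc_castSucc]
        exact hlt i' x (hS'S hx)
      · simp only [Fin.snoc_last]
        have hxT : x ∈ T := Finset.mem_of_mem_filter x hx
        have hxS : x ∈ S := (Finset.erase_subset _ _) hxT
        have hxm : x ≠ m := (Finset.mem_erase.mp hxT).1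
        exact lt_of_le_of_ne (S.min'_le x hxS) (Ne.symm hxm)
    · -- determination among chosen
      intro i j l hij hjl
      rcases Fin.eq_castSucc_or_eq_last l with ⟨l', rfl⟩ | rfl
      · rcases Fin.eq_castSucc_or_eq_last j with ⟨j', rfl⟩ | rfl
        · rcases Fin.eq_castSucc_or_eq_last i with ⟨i', rfl⟩ | rfl
          · simp only [Fin.snoc_castSucc]
            rw [hd1]
            exact hdet i' j' l' (Fin.castSucc_lt_castSucc_iff.mp hij)
              (Fin.castSucc_lt_castSucc_iff.mp hjl)
          · exact absurd (hij.trans (Fin.castSucc_lt_last _)) (lt_irrefl _)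
        · exact absurd (hjl.trans (Fin.castSucc_lt_last _)) (lt_irrefl _)
      · rcases Fin.eq_castSucc_or_eq_last j with ⟨j', rfl⟩ | rfl
        · rcases Fin.eq_castSucc_or_eq_last i with ⟨i', rfl⟩ | rfl
          · simp only [Fin.snoc_castSucc, Fin.snoc_last]
            rw [hd1]
            exact hSdet i' j' (Fin.castSucc_lt_castSucc_iff.mp hij) m hmS
          · exact absurd (hij.trans (Fin.castSucc_lt_last _)) (lt_irrefl _)
        · exact absurd hjl (lt_irrefl _)
    · -- determination with S'
      intro i j hij x hx
      rcases Fin.eq_castSucc_or_eq_last j with ⟨j', rfl⟩ | rfl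
      · rcases Fin.eq_castSucc_or_eq_last i with ⟨i', rfl⟩ | rfl
        · simp only [Fin.snoc_castSucc]
          rw [hd1]
          exact hSdet i' j' (Fin.castSucc_lt_castSucc_iff.mp hij) x (hS'S hx)
        · exact absurd (hij.trans (Fin.castSucc_lt_last _)) (lt_irrefl _)
      · rcases Fin.eq_castSucc_or_eq_last i with ⟨i', rfl⟩ | rfl
        · simp only [Fin.snoc_castSucc, Fin.snoc_last]
          rw [hd2]
          have hxf : g x = v := (Finset.mem_filter.mp hx).2
          have := congrFun hxf i'
          simpa [hg] using this
        · exact absurd hij (lt_irrefl _)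

lemma lemA {N R : ℕ} (c : Finset (Fin N) → Bool) (hN : 2 ^ R.choose 2 + 1 ≤ N) :
    ∃ (u : Fin (R+1) → Fin N) (d : Fin R → Fin R → Bool), StrictMono u ∧
      ∀ (i j : Fin R) (l : Fin (R+1)), i < j → j.castSucc < l →
        c {u i.castSucc, u j.castSucc, u l} = d i j := by
  obtain ⟨u, S, d, hu, -, hdet, -, -, -⟩ := lemA_aux c hN (R+1) le_rfl
  exact ⟨u, fun i j => d i.castSucc j.castSucc, hu,
    fun i j l hij hjl => hdet _ _ _ (Fin.castSucc_lt_castSucc_iff.mpr hij) hjl⟩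
lemma lemB_aux {N n : ℕ} (c : Fin N → Fin N → Bool) (hN : 2 ^ (2*n) ≤ N) :
    ∀ k, k ≤ 2*n →
    ∃ (v : Fin k → Fin N) (S : Finset (Fin N)) (col : Fin k → Bool),
      StrictMono v ∧ (∀ i, ∀ x ∈ S, v i < x) ∧
      (∀ i j : Fin k, i < j → c (v i) (v j) = col i) ∧
      (∀ i : Fin k, ∀ x ∈ S, c (v i) x = col i) ∧
      2 ^ (2*n - k) ≤ S.card := by
  classical
  intro k
  induction k with
  | zero =>
    intro _
    refine ⟨Fin.elim0, Finset.univ, fun i => i.elim0, fun i => i.elim0, fun i => i.elim0,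
      fun i => i.elim0, fun i => i.elim0, ?_⟩
    rw [Nat.sub_zero, Finset.card_univ, Fintype.card_fin]
    exact hN
  | succ k ih =>
    intro hk1
    obtain ⟨v, S, col, hv, hlt, hpair, hScol, hsize⟩ := ih (le_trans (Nat.le_succ k) hk1)
    have hk : k < 2*n := hk1
    have hSne : S.Nonempty :=
      Finset.card_pos.mp (lt_of_lt_of_le (Nat.pow_pos (by norm_num)) hsize)
    set m := S.min' hSne with hm
    have hmS : m ∈ S := S.min'_mem hSne
    set T := S.erase m with hT
    have hTcard : S.card - 1 ≤ T.card := by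
      rw [hT, Finset.card_erase_of_mem hmS]
    have hpow : 2 * 2 ^ (2*n - (k+1)) = 2 ^ (2*n - k) := by
      rw [← pow_succ']
      congr 1
      omega
    have h2 : 2 ≤ 2 ^ (2*n - k) := by
      calc (2:ℕ) = 2 ^ 1 := (pow_one 2).symm
      _ ≤ 2 ^ (2*n - k) := Nat.pow_le_pow_right (by norm_num) (by omega)
    have hmagic : (Finset.univ : Finset Bool).card * (2 ^ (2*n - (k+1)) - 1) < T.card := by
      have hcu : (Finset.univ : Finset Bool).card = 2 := by simp
      rw [hcu]
      have h1 : 1 ≤ 2 ^ (2*n - (k+1)) := Nat.one_le_two_pow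
      omega
    obtain ⟨b, -, hb⟩ := Finset.exists_lt_card_fiber_of_mul_lt_card_of_maps_to
      (f := fun x => c m x) (t := Finset.univ) (fun x _ => Finset.mem_univ _) hmagic
    set S' := T.filter (fun x => c m x = b) with hS'
    have hS'S : S' ⊆ S := (Finset.filter_subset _ _).trans (Finset.erase_subset _ _)
    refine ⟨Fin.snoc v m, S', Fin.snoc col b,
      strictMono_snoc hv (fun i => hlt i m hmS), ?_, ?_, ?_, by omega⟩
    · intro i x hx
      rcases Fin.eq_castSucc_or_eq_last i with ⟨i', rfl⟩ | rfl
      · simp only [Fin.snoc_castSucc]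
        exact hlt i' x (hS'S hx)
      · simp only [Fin.snoc_last]
        have hxT : x ∈ T := Finset.mem_of_mem_filter x hx
        have hxm : x ≠ m := (Finset.mem_erase.mp hxT).1
        exact lt_of_le_of_ne (S.min'_le x (hS'S hx)) (Ne.symm hxm)
    · intro i j hij
      rcases Fin.eq_castSucc_or_eq_last j with ⟨j', rfl⟩ | rfl
      · rcases Fin.eq_castSucc_or_eq_last i with ⟨i', rfl⟩ | rfl
        · simp only [Fin.snoc_castSucc]
          exact hpair i' j' (Fin.castSucc_lt_castSucc_iff.mp hij)
        · exact absurd (hij.trans (Fin.castSucc_lt_last _)) (lt_irrefl _)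
      · rcases Fin.eq_castSucc_or_eq_last i with ⟨i', rfl⟩ | rfl
        · simp only [Fin.snoc_castSucc, Fin.snoc_last]
          exact hScol i' m hmS
        · exact absurd hij (lt_irrefl _)
    · intro i x hx
      rcases Fin.eq_castSucc_or_eq_last i with ⟨i', rfl⟩ | rfl
      · simp only [Fin.snoc_castSucc]
        exact hScol i' x (hS'S hx)
      · simp only [Fin.snoc_last]
        exact (Finset.mem_filter.mp hx).2

lemma lemB {n N : ℕ} (hN : 2 ^ (2*n) ≤ N) (c : Fin N → Fin N → Bool) :
    ∃ (b : Bool) (f : Fin n → Fin N), StrictMono f ∧ ∀ i j : Fin n, i < j → c (f i) (f j) = b := by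
  classical
  obtain ⟨v, S, col, hv, -, hpair, -, -⟩ := lemB_aux c hN (2*n) le_rfl
  rcases Nat.eq_zero_or_pos n with rfl | hn
  · exact ⟨false, Fin.elim0, fun i => i.elim0, fun i => i.elim0⟩
  have hmagic : (Finset.univ : Finset Bool).card * (n-1) <
      (Finset.univ : Finset (Fin (2*n))).card := by
    rw [Finset.card_univ, Finset.card_univ, Fintype.card_bool, Fintype.card_fin]
    omega
  obtain ⟨b, -, hb⟩ := Finset.exists_lt_card_fiber_of_mul_lt_card_of_maps_to
    (f := col) (t := Finset.univ) (fun x _ => Finset.mem_univ _) hmagic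
  have hbn : n ≤ (Finset.univ.filter (fun i => col i = b)).card := by omega
  refine ⟨b, fun i => v (Finset.orderEmbOfCardLe _ hbn i),
    hv.comp (Finset.orderEmbOfCardLe _ hbn).strictMono, ?_⟩
  intro i j hij
  rw [hpair _ _ ((Finset.orderEmbOfCardLe _ hbn).strictMono hij)]
  have hmem := Finset.orderEmbOfCardLe_mem _ hbn i
  exact (Finset.mem_filter.mp hmem).2

lemma topMem {n : ℕ} (Hedges : Finset (Fin (n + 1)) → Prop)
    (h3 : ∀ e, Hedges e → e.card = 3) :
    (⊤ : SimpleGraph (Fin n)) ∈ {G : SimpleGraph (Fin n) | ∀ e, Hedges e → Tgraph G e} := by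
  intro e he
  have hc := h3 e he
  set ι := e.orderIsoOfFin hc with hι
  set a : Fin (n+1) := (ι 0).1 with ha'
  set b : Fin (n+1) := (ι 1).1 with hb'
  set c : Fin (n+1) := (ι 2).1 with hc'
  have hab : a < b := Subtype.coe_lt_coe.mpr (ι.strictMono (by decide))
  have hbc : b < c := Subtype.coe_lt_coe.mpr (ι.strictMono (by decide))
  have hsub : ({a, b, c} : Finset (Fin (n+1))) ⊆ e := by
    intro x hx
    rcases Finset.mem_insert.mp hx with rfl | hx
    · exact (ι 0).2
    rcases Finset.mem_insert.mp hx with rfl | hx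
    · exact (ι 1).2
    rw [Finset.mem_singleton.mp hx]
    exact (ι 2).2
  have hcard3 : ({a, b, c} : Finset (Fin (n+1))).card = 3 :=
    Finset.card_eq_three.mpr ⟨a, b, c, hab.ne, (hab.trans hbc).ne, hbc.ne, rfl⟩
  have he3 : e = {a, b, c} :=
    (Finset.eq_of_subset_of_card_le hsub (by rw [hc, hcard3])).symm
  have hbn : (b : ℕ) < n := by
    have h1 : (b : ℕ) < (c : ℕ) := hbc
    have h2 : (c : ℕ) < n + 1 := c.isLt
    omega
  have han : (a : ℕ) < n := by
    have h1 : (a : ℕ) < (b : ℕ) := hab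
    omega
  refine ⟨a, b, c, hab, hbc, he3, han, hbn, ?_⟩
  rw [SimpleGraph.top_adj]
  exact Fin.ne_of_val_ne (Nat.ne_of_lt hab)
theorem stmt12 (n : ℕ) (Hedges : Finset (Fin (n + 1)) → Prop)
    (h3 : ∀ e, Hedges e → e.card = 3) :
    hyperRamsey Hedges ≤
      2 ^ Nat.choose
          (familyOrdRamsey {G : SimpleGraph (Fin n) | ∀ e, Hedges e → Tgraph G e}) 2 + 1 := by
  classical
  set Fam := {G : SimpleGraph (Fin n) | ∀ e, Hedges e → Tgraph G e} with hFam
  have hne : (2^(2*n)) ∈ {N | ∀ c' : Fin N → Fin N → Bool,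
      ∃ G ∈ Fam, ∃ b : Bool, HasOrdCopy G c' b} := by
    intro c'
    obtain ⟨b, f, hf, hcol⟩ := lemB le_rfl c'
    exact ⟨⊤, topMem Hedges h3, b, f, hf, fun i j hij _ => hcol i j hij⟩
  have hRmem : ∀ c' : Fin (familyOrdRamsey Fam) → Fin (familyOrdRamsey Fam) → Bool,
      ∃ G ∈ Fam, ∃ b : Bool, HasOrdCopy G c' b :=
    Nat.sInf_mem (Set.nonempty_of_mem hne)
  have hmem : (2 ^ (familyOrdRamsey Fam).choose 2 + 1) ∈
      {N | ∀ c : Finset (Fin N) → Bool, ∃ b : Bool,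
        ∃ f : Fin (n+1) → Fin N, Function.Injective f ∧ ∀ e, Hedges e → c (e.image f) = b} := by
    intro c
    obtain ⟨u, d, hu, hdet⟩ := lemA c le_rfl
    obtain ⟨G, hG, bb, f, hf, hcopy⟩ := hRmem d
    set F' : Fin (n+1) → Fin (familyOrdRamsey Fam + 1) :=
      Fin.snoc (fun j => (f j).castSucc) (Fin.last (familyOrdRamsey Fam)) with hF'
    have hF'mono : StrictMono F' :=
      strictMono_snoc (fun i j hij => Fin.castSucc_lt_castSucc_iff.mpr (hf hij))
        (fun i => Fin.castSucc_lt_last _)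
    have hfa : ∀ (x : Fin (n+1)) (hx : (x:ℕ) < n), F' x = (f ⟨(x:ℕ), hx⟩).castSucc := by
      intro x hx
      have hxe : x = Fin.castSucc ⟨(x:ℕ), hx⟩ := Fin.ext rfl
      conv_lhs => rw [hxe, hF']
      exact Fin.snoc_castSucc _ _ _
    refine ⟨bb, u ∘ F', (hu.comp hF'mono).injective, ?_⟩
    intro e he
    obtain ⟨a, b', c', hab, hbc, hee, ha, hb, hAdj⟩ := hG e he
    have himg : (e.image (u ∘ F')) = {u (F' a), u (F' b'), u (F' c')} := by
      rw [hee]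
      simp [Finset.image_insert, Finset.image_singleton, Function.comp]
    rw [himg]
    have h1 : F' a = (f ⟨(a:ℕ), ha⟩).castSucc := hfa a ha
    have h2 : F' b' = (f ⟨(b':ℕ), hb⟩).castSucc := hfa b' hb
    have hlt3 : (f ⟨(b':ℕ), hb⟩).castSucc < F' c' := by
      rw [← h2]
      exact hF'mono hbc
    have hij : f ⟨(a:ℕ), ha⟩ < f ⟨(b':ℕ), hb⟩ :=
      hf (show (⟨(a:ℕ), ha⟩ : Fin n) < ⟨(b':ℕ), hb⟩ from hab)
    rw [h1, h2, hdet _ _ _ hij hlt3]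
    exact hcopy _ _ (show (⟨(a:ℕ), ha⟩ : Fin n) < ⟨(b':ℕ), hb⟩ from hab) hAdj
  exact Nat.sInf_le hmem
end

section
/- For every integer t ≥ 3 there exist a constant c > 0 and a positive integer n₀ such that for every integer n ≥ n₀, R_<(K^{<(3)}_{t+1}, K^{<(3)}_3(n)) ≥ 2^{c·n·log n}. -/
/-- The ordered Ramsey number `R_<(G, H)` of two ordered uniform hypergraphs given by edge
predicates `E` on `[m]` and `E'` on `[m']`: the least `N` such that every red/blue coloring of
the finite subsets of `[N]` contains a red (`true`) increasing copy of the first hypergraph or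
a blue (`false`) increasing copy of the second one. -/
noncomputable def ordRamseyH {m m' : ℕ}
    (E : Finset (Fin m) → Prop) (E' : Finset (Fin m') → Prop) : ℕ :=
  sInf {N | ∀ c : Finset (Fin N) → Bool,
    (∃ f : Fin m → Fin N, StrictMono f ∧ ∀ e, E e → c (e.image f) = true) ∨
    (∃ g : Fin m' → Fin N, StrictMono g ∧ ∀ e, E' e → c (e.image g) = false)}

/-- `K^{<(3)}_3(n)`: the ordered complete `3`-partite `3`-uniform hypergraph on `[3n]` whose
parts are the three consecutive intervals of length `n`. -/
def K33 (n : ℕ) (e : Finset (Fin (3 * n))) : Prop :=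
  ∃ a b c : Fin (3 * n), (a : ℕ) < n ∧ n ≤ (b : ℕ) ∧ (b : ℕ) < 2 * n ∧ 2 * n ≤ (c : ℕ) ∧
    e = {a, b, c}

/-- The ordered complete `3`-uniform hypergraph `K^{<(3)}_t` on `[t]`: every `3`-element subset
is an edge. -/
def completeH3 (t : ℕ) (e : Finset (Fin t)) : Prop := e.card = 3



set_option maxHeartbeats 1000000

open Finset

attribute [local instance 10] Classical.propDecidable

noncomputable section

-- counting helpers assumed from p3 (inlined later)
section counting
variable {ι : Type*} [Fintype ι] [DecidableEq ι] {β : Type*} [Fintype β]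

lemma count_confined (P : (ι → β) → Prop) [DecidablePred P] (t : ι → Finset β)
    (h : ∀ f : ι → β, P f → ∀ i, f i ∈ t i) :
    (univ.filter P).card ≤ ∏ i, (t i).card := by
  rw [← Fintype.card_piFinset]
  exact card_le_card (fun f hf => Fintype.mem_piFinset.2 (h f (mem_filter.1 hf).2))

lemma prod_ite_card (K : Finset ι) (x y : ℕ) :
    (∏ i : ι, if i ∈ K then x else y) = x ^ K.card * y ^ (Fintype.card ι - K.card) := by
  rw [← Finset.prod_filter_mul_prod_filter_not univ (· ∈ K)]
  have h1 : univ.filter (· ∈ K) = K := by ext i; simp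
  have h2 : univ.filter (¬ · ∈ K) = Kᶜ := by ext i; simp
  rw [Finset.prod_ite_of_true, Finset.prod_ite_of_false]
  · rw [h1, h2, Finset.prod_const, Finset.prod_const, Finset.card_compl]
  · intro i hi; rw [h2] at hi; simpa using hi
  · intro i hi; rw [h1] at hi; exact hi

lemma exists_not_bad {Ω : Type*} [Fintype Ω] (Bad : Ω → Prop) [DecidablePred Bad]
    (h : (univ.filter Bad).card < Fintype.card Ω) : ∃ ω, ¬ Bad ω := by
  by_contra hc
  push_neg at hc
  have heq : univ.filter Bad = univ := filter_eq_self.2 (fun ω _ => hc ω)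
  rw [heq, card_univ] at h
  exact lt_irrefl _ h

lemma card_filter_le_sum {Ω : Type*} [Fintype Ω] {γ : Type*} [DecidableEq γ]
    (Bad : Ω → Prop) [DecidablePred Bad] (I : Finset γ) (S : γ → Finset Ω)
    (h : ∀ ω, Bad ω → ∃ z ∈ I, ω ∈ S z) :
    (univ.filter Bad).card ≤ ∑ z ∈ I, (S z).card :=
  le_trans (card_le_card (fun ω hω => mem_biUnion.2 (h ω (mem_filter.1 hω).2)))
    card_biUnion_le

lemma markov {Ω : Type*} [Fintype Ω] (g : Ω → ℕ) (T : ℕ) :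
    (univ.filter (fun ω => T + 1 ≤ g ω)).card * (T + 1) ≤ ∑ ω, g ω := by
  calc (univ.filter (fun ω => T + 1 ≤ g ω)).card * (T + 1)
      = (univ.filter (fun ω => T + 1 ≤ g ω)).card • (T + 1) := (smul_eq_mul _ _).symm
    _ ≤ ∑ ω ∈ univ.filter (fun ω => T + 1 ≤ g ω), g ω :=
        Finset.card_nsmul_le_sum _ _ _ (fun x hx => (mem_filter.1 hx).2)
    _ ≤ ∑ ω, g ω := Finset.sum_le_sum_of_subset (filter_subset _ _)

end counting

section ramsey
variable {α : Type*} [LinearOrder α] [DecidableEq α]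

lemma ramsey2 (r b : ℕ) : ∃ R : ℕ, ∀ (V : Finset α) (c : Finset α → Bool),
    R ≤ V.card →
    (∃ S ⊆ V, S.card = r ∧ ∀ x ∈ S, ∀ y ∈ S, x < y → c {x, y} = true) ∨
    (∃ S ⊆ V, S.card = b ∧ ∀ x ∈ S, ∀ y ∈ S, x < y → c {x, y} = false) := by
  induction r generalizing b with
  | zero => exact ⟨0, fun V c _ => Or.inl ⟨∅, empty_subset V, card_empty, by simp⟩⟩
  | succ r ihr =>
    induction b with
    | zero => exact ⟨0, fun V c _ => Or.inr ⟨∅, empty_subset V, card_empty, by simp⟩⟩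
    | succ b ihb =>
      obtain ⟨Ra, hRa⟩ := ihr (b + 1)
      obtain ⟨Rb, hRb⟩ := ihb
      refine ⟨Ra + Rb + 1, fun V c hV => ?_⟩
      have hVne : V.Nonempty := card_pos.1 (by omega)
      set v := V.min' hVne with hv
      have hvV : v ∈ V := V.min'_mem hVne
      set W := V.erase v with hW
      have hWcard : W.card = V.card - 1 := card_erase_of_mem hvV
      set Wr := W.filter (fun x => c {v, x} = true) with hWr
      set Wb := W.filter (fun x => c {v, x} ≠ true) with hWb
      have hsplit : Wr.card + Wb.card = W.card := card_filter_add_card_filter_not _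
      have hcase : Ra ≤ Wr.card ∨ Rb ≤ Wb.card := by omega
      rcases hcase with hcase | hcase
      · rcases hRa Wr c hcase with ⟨S, hS, hScard, hSmono⟩ | ⟨S, hS, hScard, hSmono⟩
        · -- red r-clique in red nbhd; add v
          have hSV : S ⊆ V := hS.trans ((filter_subset _ _).trans (erase_subset _ _))
          have hvS : v ∉ S := fun hmem => (by
            have := hS hmem
            simp only [hWr, mem_filter, hW, mem_erase] at this
            exact this.1.1 rfl)
          refine Or.inl ⟨insert v S, insert_subset hvV hSV, by rw [card_insert_of_notMem hvS, hScard], ?_⟩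
          intro x hx y hy hxy
          rcases mem_insert.1 hx with rfl | hx
          · rcases mem_insert.1 hy with rfl | hy
            · exact absurd hxy (lt_irrefl _)
            · have := (hS hy)
              simp only [hWr, mem_filter] at this
              exact this.2
          · rcases mem_insert.1 hy with rfl | hy
            · exact absurd (V.min'_le _ (hSV hx)) (not_le.2 hxy)
            · exact hSmono x hx y hy hxy
        · exact Or.inr ⟨S, hS.trans ((filter_subset _ _).trans (erase_subset _ _)), hScard, hSmono⟩
      · rcases hRb Wb c hcase with ⟨S, hS, hScard, hSmono⟩ | ⟨S, hS, hScard, hSmono⟩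
        · exact Or.inl ⟨S, hS.trans ((filter_subset _ _).trans (erase_subset _ _)), hScard, hSmono⟩
        · have hSV : S ⊆ V := hS.trans ((filter_subset _ _).trans (erase_subset _ _))
          have hvS : v ∉ S := fun hmem => (by
            have := hS hmem
            simp only [hWb, mem_filter, hW, mem_erase] at this
            exact this.1.1 rfl)
          refine Or.inr ⟨insert v S, insert_subset hvV hSV, by rw [card_insert_of_notMem hvS, hScard], ?_⟩
          intro x hx y hy hxy
          rcases mem_insert.1 hx with rfl | hx
          · rcases mem_insert.1 hy with rfl | hy
            · exact absurd hxy (lt_irrefl _)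
            · have := (hS hy)
              simp only [hWb, mem_filter] at this
              simpa using this.2
          · rcases mem_insert.1 hy with rfl | hy
            · exact absurd (V.min'_le _ (hSV hx)) (not_le.2 hxy)
            · exact hSmono x hx y hy hxy

lemma ramsey3 (r b : ℕ) : ∃ R : ℕ, ∀ (V : Finset α) (c : Finset α → Bool),
    R ≤ V.card →
    (∃ S ⊆ V, S.card = r ∧ ∀ x ∈ S, ∀ y ∈ S, ∀ z ∈ S, x < y → y < z → c {x, y, z} = true) ∨
    (∃ S ⊆ V, S.card = b ∧ ∀ x ∈ S, ∀ y ∈ S, ∀ z ∈ S, x < y → y < z → c {x, y, z} = false) := by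
  induction r generalizing b with
  | zero => exact ⟨0, fun V c _ => Or.inl ⟨∅, empty_subset V, card_empty, by simp⟩⟩
  | succ r ihr =>
    induction b with
    | zero => exact ⟨0, fun V c _ => Or.inr ⟨∅, empty_subset V, card_empty, by simp⟩⟩
    | succ b ihb =>
      obtain ⟨Ra, hRa⟩ := ihr (b + 1)
      obtain ⟨Rb, hRb⟩ := ihb
      obtain ⟨R2, hR2⟩ := ramsey2 (α := α) Ra Rb
      refine ⟨R2 + 1, fun V c hV => ?_⟩
      have hVne : V.Nonempty := card_pos.1 (by omega)
      set v := V.min' hVne with hv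
      have hvV : v ∈ V := V.min'_mem hVne
      set W := V.erase v with hW
      have hWcard : R2 ≤ W.card := by
        rw [card_erase_of_mem hvV]; omega
      set c2 : Finset α → Bool := fun e => c (insert v e) with hc2
      rcases hR2 W c2 hWcard with ⟨S1, hS1, hS1card, hS1mono⟩ | ⟨S1, hS1, hS1card, hS1mono⟩
      · rcases hRa S1 c (le_of_eq hS1card.symm) with ⟨S, hS, hScard, hSmono⟩ | ⟨S, hS, hScard, hSmono⟩
        · have hSV : S ⊆ V := (hS.trans hS1).trans (erase_subset _ _)
          have hvS : v ∉ S := fun hmem => by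
            have := hS1 (hS hmem); rw [hW, mem_erase] at this; exact this.1 rfl
          refine Or.inl ⟨insert v S, insert_subset hvV hSV, by rw [card_insert_of_notMem hvS, hScard], ?_⟩
          intro x hx y hy z hz hxy hyz
          rcases mem_insert.1 hx with rfl | hx
          · rcases mem_insert.1 hy with rfl | hy
            · exact absurd hxy (lt_irrefl _)
            · rcases mem_insert.1 hz with rfl | hz
              · exact absurd (V.min'_le _ (hSV hy)) (not_le.2 hyz)
              · have := hS1mono y (hS hy) z (hS hz) hyz
                rw [hc2] at this
                exact this
          · rcases mem_insert.1 hy with rfl | hy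
            · exact absurd (V.min'_le _ (hSV hx)) (not_le.2 hxy)
            · rcases mem_insert.1 hz with rfl | hz
              · exact absurd (V.min'_le _ (hSV hy)) (not_le.2 hyz)
              · exact hSmono x hx y hy z hz hxy hyz
        · exact Or.inr ⟨S, (hS.trans hS1).trans (erase_subset _ _), hScard, hSmono⟩
      · rcases hRb S1 c (le_of_eq hS1card.symm) with ⟨S, hS, hScard, hSmono⟩ | ⟨S, hS, hScard, hSmono⟩
        · exact Or.inl ⟨S, (hS.trans hS1).trans (erase_subset _ _), hScard, hSmono⟩
        · have hSV : S ⊆ V := (hS.trans hS1).trans (erase_subset _ _)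
          have hvS : v ∉ S := fun hmem => by
            have := hS1 (hS hmem); rw [hW, mem_erase] at this; exact this.1 rfl
          refine Or.inr ⟨insert v S, insert_subset hvV hSV, by rw [card_insert_of_notMem hvS, hScard], ?_⟩
          intro x hx y hy z hz hxy hyz
          rcases mem_insert.1 hx with rfl | hx
          · rcases mem_insert.1 hy with rfl | hy
            · exact absurd hxy (lt_irrefl _)
            · rcases mem_insert.1 hz with rfl | hz
              · exact absurd (V.min'_le _ (hSV hy)) (not_le.2 hyz)
              · have := hS1mono y (hS hy) z (hS hz) hyz
                rw [hc2] at this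
                simpa using this
          · rcases mem_insert.1 hy with rfl | hy
            · exact absurd (V.min'_le _ (hSV hx)) (not_le.2 hxy)
            · rcases mem_insert.1 hz with rfl | hz
              · exact absurd (V.min'_le _ (hSV hy)) (not_le.2 hyz)
              · exact hSmono x hx y hy z hz hxy hyz

end ramsey

section graph

variable {q M : ℕ}

def Adj (g : Fin q × Fin q → Fin M) (x y : Fin q) : Prop :=
  x ≠ y ∧ ((g (min x y, max x y)) : ℕ) = 0

lemma adj_symm {g : Fin q × Fin q → Fin M} {x y : Fin q} (h : Adj g x y) : Adj g y x := by
  obtain ⟨h1, h2⟩ := h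
  exact ⟨h1.symm, by rwa [min_comm, max_comm]⟩

def TriCond (g : Fin q × Fin q → Fin M) (p : Fin q × Fin q × Fin q) : Prop :=
  p.1 < p.2.1 ∧ p.2.1 < p.2.2 ∧ Adj g p.1 p.2.1 ∧ Adj g p.1 p.2.2 ∧ Adj g p.2.1 p.2.2

def Tri (g : Fin q × Fin q → Fin M) : ℕ := (univ.filter (TriCond g)).card

def ZS (M : ℕ) : Finset (Fin M) := univ.filter (fun v => (v : ℕ) = 0)

def NZS (M : ℕ) : Finset (Fin M) := univ.filter (fun v => (v : ℕ) ≠ 0)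

lemma card_ZS (hM : 0 < M) : (ZS M).card = 1 := by
  have : ZS M = {(⟨0, hM⟩ : Fin M)} := by
    ext v; simp [ZS, Fin.ext_iff]
  rw [this, card_singleton]

lemma card_NZS (hM : 0 < M) : (NZS M).card = M - 1 := by
  have h1 : (ZS M).card + (NZS M).card = M := by
    rw [ZS, NZS, card_filter_add_card_filter_not]
    simp
  have := card_ZS (M := M) hM
  omega

lemma minmax_pair_eq {x y x' y' : Fin q} (h1 : min x y = min x' y') (h2 : max x y = max x' y') :
    (x = x' ∧ y = y') ∨ (x = y' ∧ y = x') := by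
  rcases le_total x y with h | h <;> rcases le_total x' y' with h' | h'
  · rw [min_eq_left h, min_eq_left h'] at h1
    rw [max_eq_right h, max_eq_right h'] at h2
    exact Or.inl ⟨h1, h2⟩
  · rw [min_eq_left h, min_eq_right h'] at h1
    rw [max_eq_right h, max_eq_left h'] at h2
    exact Or.inr ⟨h1, h2⟩
  · rw [min_eq_right h, min_eq_left h'] at h1
    rw [max_eq_left h, max_eq_right h'] at h2
    exact Or.inr ⟨h2, h1⟩
  · rw [min_eq_right h, min_eq_right h'] at h1
    rw [max_eq_left h, max_eq_left h'] at h2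
    exact Or.inl ⟨h2, h1⟩

lemma count_tri_fixed (hM : 0 < M) (p : Fin q × Fin q × Fin q) :
    (univ.filter (fun g : Fin q × Fin q → Fin M => TriCond g p)).card ≤ M ^ (q * q - 3) := by
  by_cases hp : p.1 < p.2.1 ∧ p.2.1 < p.2.2
  · set K : Finset (Fin q × Fin q) := {(p.1, p.2.1), (p.1, p.2.2), (p.2.1, p.2.2)} with hK
    have hne01 : p.1 ≠ p.2.1 := ne_of_lt hp.1
    have hne12 : p.2.1 ≠ p.2.2 := ne_of_lt hp.2
    have hKcard : K.card = 3 := by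
      rw [hK]
      exact Finset.card_eq_three.2 ⟨_, _, _,
        fun h => hne12 (congrArg Prod.snd h),
        fun h => hne01 (congrArg Prod.fst h),
        fun h => hne01 (congrArg Prod.fst h), rfl⟩
    calc (univ.filter (fun g : Fin q × Fin q → Fin M => TriCond g p)).card
        ≤ ∏ c : Fin q × Fin q, (if c ∈ K then ZS M else univ).card := by
          apply count_confined
          intro g hg c
          obtain ⟨hs1, hs2, ha1, ha2, ha3⟩ := hg
          by_cases hc : c ∈ K
          · rw [if_pos hc]
            rw [hK] at hc
            simp only [mem_insert, mem_singleton] at hc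
            have e1 : (min p.1 p.2.1, max p.1 p.2.1) = (p.1, p.2.1) := by
              rw [min_eq_left (le_of_lt hs1), max_eq_right (le_of_lt hs1)]
            have e2 : (min p.1 p.2.2, max p.1 p.2.2) = (p.1, p.2.2) := by
              rw [min_eq_left (le_of_lt (hs1.trans hs2)), max_eq_right (le_of_lt (hs1.trans hs2))]
            have e3 : (min p.2.1 p.2.2, max p.2.1 p.2.2) = (p.2.1, p.2.2) := by
              rw [min_eq_left (le_of_lt hs2), max_eq_right (le_of_lt hs2)]
            rcases hc with rfl | rfl | rfl
            · rw [ZS, mem_filter]; exact ⟨mem_univ _, by rw [← e1]; exact ha1.2⟩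
            · rw [ZS, mem_filter]; exact ⟨mem_univ _, by rw [← e2]; exact ha2.2⟩
            · rw [ZS, mem_filter]; exact ⟨mem_univ _, by rw [← e3]; exact ha3.2⟩
          · rw [if_neg hc]; exact mem_univ _
      _ = ∏ c : Fin q × Fin q, (if c ∈ K then (ZS M).card else (univ : Finset (Fin M)).card) := by
          apply Finset.prod_congr rfl; intro c _; split <;> rfl
      _ = (ZS M).card ^ K.card * (univ : Finset (Fin M)).card ^ (Fintype.card (Fin q × Fin q) - K.card) :=
          prod_ite_card K _ _
      _ ≤ M ^ (q * q - 3) := by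
          rw [card_ZS hM, hKcard, card_univ]
          simp [Fintype.card_prod, Fintype.card_fin]
  · have : (univ.filter (fun g : Fin q × Fin q → Fin M => TriCond g p)) = ∅ := by
      apply filter_eq_empty_iff.2
      intro g _
      intro hg
      exact hp ⟨hg.1, hg.2.1⟩
    rw [this, card_empty]
    exact Nat.zero_le _

lemma sum_tri_le (hM : 0 < M) :
    (∑ g : Fin q × Fin q → Fin M, Tri g) ≤ q * q * q * M ^ (q * q - 3) := by
  have hswap : (∑ g : Fin q × Fin q → Fin M, Tri g)
      = ∑ p : Fin q × Fin q × Fin q,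
          (univ.filter (fun g : Fin q × Fin q → Fin M => TriCond g p)).card := by
    simp only [Tri, card_filter]
    rw [Finset.sum_comm]
  rw [hswap]
  calc ∑ p : Fin q × Fin q × Fin q,
          (univ.filter (fun g : Fin q × Fin q → Fin M => TriCond g p)).card
      ≤ ∑ _p : Fin q × Fin q × Fin q, M ^ (q * q - 3) :=
        Finset.sum_le_sum (fun p _ => count_tri_fixed hM p)
    _ = q * q * q * M ^ (q * q - 3) := by
        rw [Finset.sum_const, card_univ]
        simp only [Fintype.card_prod, Fintype.card_fin, smul_eq_mul]
        ring

end graph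

end

noncomputable section graph2

variable {q M : ℕ}

def EmptyPair (σ₀ u : ℕ) (g : Fin q × Fin q → Fin M) : Prop :=
  ∃ S U : Finset (Fin q), S.card = σ₀ ∧ U.card = u ∧ Disjoint S U ∧
    ∀ x ∈ S, ∀ y ∈ U, ¬ Adj g x y

lemma count_empty_fixed (hM : 0 < M) (S U : Finset (Fin q)) (hd : Disjoint S U) :
    (univ.filter (fun g : Fin q × Fin q → Fin M => ∀ x ∈ S, ∀ y ∈ U, ¬ Adj g x y)).card
      ≤ (M - 1) ^ (S.card * U.card) * M ^ (q * q - S.card * U.card) := by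
  set K := (S ×ˢ U).image (fun z : Fin q × Fin q => (min z.1 z.2, max z.1 z.2)) with hK
  have hinj : Set.InjOn (fun z : Fin q × Fin q => (min z.1 z.2, max z.1 z.2)) ↑(S ×ˢ U) := by
    intro z hz z' hz' he
    rw [Finset.mem_coe, Finset.mem_product] at hz hz'
    have h1 : min z.1 z.2 = min z'.1 z'.2 := congrArg Prod.fst he
    have h2 : max z.1 z.2 = max z'.1 z'.2 := congrArg Prod.snd he
    rcases minmax_pair_eq h1 h2 with ⟨e1, e2⟩ | ⟨e1, e2⟩
    · exact Prod.ext e1 e2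
    · exact absurd (e1 ▸ hz.1) (Finset.disjoint_left.1 hd · hz'.2)
  have hKcard : K.card = S.card * U.card := by
    rw [hK, card_image_of_injOn hinj, card_product]
  calc (univ.filter (fun g : Fin q × Fin q → Fin M => ∀ x ∈ S, ∀ y ∈ U, ¬ Adj g x y)).card
      ≤ ∏ c : Fin q × Fin q, (if c ∈ K then NZS M else univ).card := by
        apply count_confined
        intro g hg c
        by_cases hc : c ∈ K
        · rw [if_pos hc]
          rw [hK, mem_image] at hc
          obtain ⟨z, hz, rfl⟩ := hc
          rw [mem_product] at hz
          have hne : z.1 ≠ z.2 := fun h => Finset.disjoint_left.1 hd hz.1 (h ▸ hz.2)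
          have hnadj := hg z.1 hz.1 z.2 hz.2
          rw [Adj] at hnadj
          push_neg at hnadj
          rw [NZS, mem_filter]
          exact ⟨mem_univ _, hnadj hne⟩
        · rw [if_neg hc]; exact mem_univ _
    _ = ∏ c : Fin q × Fin q, (if c ∈ K then (NZS M).card else (univ : Finset (Fin M)).card) := by
        apply Finset.prod_congr rfl; intro c _; split <;> rfl
    _ = (NZS M).card ^ K.card * (univ : Finset (Fin M)).card ^ (Fintype.card (Fin q × Fin q) - K.card) :=
        prod_ite_card K _ _
    _ ≤ (M - 1) ^ (S.card * U.card) * M ^ (q * q - S.card * U.card) := by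
        rw [card_NZS hM, hKcard, card_univ]
        simp [Fintype.card_prod, Fintype.card_fin]

lemma count_empty_all (hM : 0 < M) (σ₀ u : ℕ) :
    (univ.filter (EmptyPair σ₀ u : (Fin q × Fin q → Fin M) → Prop)).card
      ≤ q.choose σ₀ * q.choose u * ((M - 1) ^ (σ₀ * u) * M ^ (q * q - σ₀ * u)) := by
  have hcover := card_filter_le_sum (EmptyPair σ₀ u : (Fin q × Fin q → Fin M) → Prop)
    ((univ.powersetCard σ₀) ×ˢ (univ.powersetCard u))
    (fun z => univ.filter (fun g : Fin q × Fin q → Fin M =>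
      Disjoint z.1 z.2 ∧ ∀ x ∈ z.1, ∀ y ∈ z.2, ¬ Adj g x y))
    (by
      rintro g ⟨S, U, hS, hU, hd, hemp⟩
      refine ⟨(S, U), ?_, ?_⟩
      · rw [mem_product]
        exact ⟨mem_powersetCard_univ.2 hS, mem_powersetCard_univ.2 hU⟩
      · rw [mem_filter]; exact ⟨mem_univ _, hd, hemp⟩)
  refine le_trans hcover (le_trans (Finset.sum_le_sum (g := fun _ =>
      (M - 1) ^ (σ₀ * u) * M ^ (q * q - σ₀ * u)) ?_) ?_)
  · rintro ⟨S, U⟩ hz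
    rw [mem_product, mem_powersetCard_univ, mem_powersetCard_univ] at hz
    dsimp only at hz ⊢
    by_cases hd : Disjoint S U
    · calc (univ.filter (fun g : Fin q × Fin q → Fin M =>
            Disjoint S U ∧ ∀ x ∈ S, ∀ y ∈ U, ¬ Adj g x y)).card
          ≤ (univ.filter (fun g : Fin q × Fin q → Fin M =>
            ∀ x ∈ S, ∀ y ∈ U, ¬ Adj g x y)).card := by
            apply card_le_card
            intro g hg
            rw [mem_filter] at *
            exact ⟨hg.1, hg.2.2⟩
        _ ≤ (M - 1) ^ (σ₀ * u) * M ^ (q * q - σ₀ * u) := by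
            have := count_empty_fixed hM S U hd
            rwa [hz.1, hz.2] at this
    · have : (univ.filter (fun g : Fin q × Fin q → Fin M =>
          Disjoint S U ∧ ∀ x ∈ S, ∀ y ∈ U, ¬ Adj g x y)) = ∅ := by
        apply filter_eq_empty_iff.2
        intro g _ hg
        exact hd hg.1
      rw [this, card_empty]
      exact Nat.zero_le _
  · rw [Finset.sum_const, smul_eq_mul, card_product, card_powersetCard, card_powersetCard,
      card_univ, Fintype.card_fin]

lemma graph_exists (σ₀ u T : ℕ) (hM : 0 < M)
    (Ha : 2 * (q * q * q * M ^ (q * q - 3)) < (T + 1) * M ^ (q * q))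
    (Hb : 2 * (q.choose σ₀ * q.choose u * ((M - 1) ^ (σ₀ * u) * M ^ (q * q - σ₀ * u))) < M ^ (q * q)) :
    ∃ g : Fin q × Fin q → Fin M, Tri g ≤ T ∧
      ∀ S U : Finset (Fin q), S.card = σ₀ → U.card = u → Disjoint S U →
        ∃ x ∈ S, ∃ y ∈ U, Adj g x y := by
  have hcardΩ : Fintype.card (Fin q × Fin q → Fin M) = M ^ (q * q) := by
    rw [Fintype.card_fun]
    simp [Fintype.card_prod, Fintype.card_fin]
  have hA : (univ.filter (fun g : Fin q × Fin q → Fin M => T + 1 ≤ Tri g)).card * (T + 1)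
      ≤ q * q * q * M ^ (q * q - 3) := le_trans (markov _ _) (sum_tri_le hM)
  have hB := count_empty_all (q := q) hM σ₀ u
  have hlt : (univ.filter (fun g : Fin q × Fin q → Fin M =>
      (T + 1 ≤ Tri g) ∨ EmptyPair σ₀ u g)).card < Fintype.card (Fin q × Fin q → Fin M) := by
    rw [hcardΩ]
    have hsub : (univ.filter (fun g : Fin q × Fin q → Fin M =>
        (T + 1 ≤ Tri g) ∨ EmptyPair σ₀ u g)).card
        ≤ (univ.filter (fun g : Fin q × Fin q → Fin M => T + 1 ≤ Tri g)).card
          + (univ.filter (EmptyPair σ₀ u : (Fin q × Fin q → Fin M) → Prop)).card := by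
      rw [filter_or]
      exact card_union_le _ _
    have h2A : 2 * ((univ.filter (fun g : Fin q × Fin q → Fin M => T + 1 ≤ Tri g)).card) * (T + 1)
        < (T + 1) * M ^ (q * q) := by
      calc 2 * ((univ.filter (fun g : Fin q × Fin q → Fin M => T + 1 ≤ Tri g)).card) * (T + 1)
          = 2 * (((univ.filter (fun g : Fin q × Fin q → Fin M => T + 1 ≤ Tri g)).card) * (T + 1)) := by ring
        _ ≤ 2 * (q * q * q * M ^ (q * q - 3)) := by omega
        _ < (T + 1) * M ^ (q * q) := Ha
    have h2A' : 2 * ((univ.filter (fun g : Fin q × Fin q → Fin M => T + 1 ≤ Tri g)).card)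
        < M ^ (q * q) := by
      have hTpos : 0 < T + 1 := Nat.succ_pos _
      nlinarith [h2A]
    omega
  obtain ⟨g, hg⟩ := exists_not_bad _ hlt
  push_neg at hg
  obtain ⟨hg1, hg2⟩ := hg
  refine ⟨g, by omega, ?_⟩
  intro S U hS hU hd
  rw [EmptyPair] at hg2
  push_neg at hg2
  obtain ⟨x, hx, y, hy, hadj⟩ := hg2 S U hS hU hd
  exact ⟨x, hx, y, hy, hadj⟩

end graph2

noncomputable section deletion

variable {q M : ℕ}

def DelSet (g : Fin q × Fin q → Fin M) : Finset (Fin q) :=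
  (univ.filter (TriCond g)).image (fun p => p.1)

lemma card_delSet (g : Fin q × Fin q → Fin M) : (DelSet g).card ≤ Tri g :=
  card_image_le

def Adj1 (g : Fin q × Fin q → Fin M) (x y : Fin q) : Prop :=
  Adj g x y ∧ x ∉ DelSet g ∧ y ∉ DelSet g

lemma adj1_symm {g : Fin q × Fin q → Fin M} {x y : Fin q} (h : Adj1 g x y) : Adj1 g y x :=
  ⟨adj_symm h.1, h.2.2, h.2.1⟩

lemma adj1_ne {g : Fin q × Fin q → Fin M} {x y : Fin q} (h : Adj1 g x y) : x ≠ y := h.1.1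

lemma mk_tri {g : Fin q × Fin q → Fin M} {x y z : Fin q} (hxy : x < y) (hyz : y < z)
    (h1 : Adj g x y) (h2 : Adj g x z) (h3 : Adj g y z) : x ∈ DelSet g :=
  mem_image.2 ⟨(x, (y, z)), mem_filter.2 ⟨mem_univ _, hxy, hyz, h1, h2, h3⟩, rfl⟩

lemma adj1_trianglefree {g : Fin q × Fin q → Fin M} {a b c : Fin q}
    (h1 : Adj1 g a b) (h2 : Adj1 g a c) (h3 : Adj1 g b c) : False := by
  have hnA : a ∉ DelSet g := h1.2.1
  have hnB : b ∉ DelSet g := h1.2.2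
  have hnC : c ∉ DelSet g := h2.2.2
  have e1 : Adj g a b := h1.1
  have e2 : Adj g a c := h2.1
  have e3 : Adj g b c := h3.1
  rcases lt_trichotomy a b with hab | hab | hab
  · rcases lt_trichotomy b c with hbc | hbc | hbc
    · exact hnA (mk_tri hab hbc e1 e2 e3)
    · exact (adj1_ne h3) hbc
    · rcases lt_trichotomy a c with hac | hac | hac
      · exact hnA (mk_tri hac hbc e2 e1 (adj_symm e3))
      · exact (adj1_ne h2) hac
      · exact hnC (mk_tri hac hab (adj_symm e2) (adj_symm e3) e1)
  · exact (adj1_ne h1) hab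
  · rcases lt_trichotomy a c with hac | hac | hac
    · exact hnB (mk_tri hab hac (adj_symm e1) e3 e2)
    · exact (adj1_ne h2) hac
    · rcases lt_trichotomy b c with hbc | hbc | hbc
      · exact hnB (mk_tri hbc hac e3 (adj_symm e1) (adj_symm e2))
      · exact (adj1_ne h3) hbc
      · exact hnC (mk_tri hbc hab (adj_symm e3) (adj_symm e2) (adj_symm e1))

lemma nonadj_bound {g : Fin q × Fin q → Fin M} (σ₀ u T σ : ℕ) (hTri : Tri g ≤ T)
    (hprop : ∀ S U : Finset (Fin q), S.card = σ₀ → U.card = u → Disjoint S U →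
      ∃ x ∈ S, ∃ y ∈ U, Adj g x y)
    (hσ : σ₀ + T ≤ σ) :
    ∀ S : Finset (Fin q), S.card = σ →
      (univ.filter (fun y => ∀ x ∈ S, ¬ Adj1 g x y)).card ≤ u + T + σ := by
  intro S hS
  by_contra hc
  push_neg at hc
  set W := (univ.filter (fun y => ∀ x ∈ S, ¬ Adj1 g x y)) \ (DelSet g ∪ S) with hW
  have hdel := card_delSet g
  have hWcard : u ≤ W.card := by
    have h1 : (DelSet g ∪ S).card ≤ T + σ := by
      refine le_trans (card_union_le _ _) ?_
      omega
    have h2 := le_card_sdiff (DelSet g ∪ S) (univ.filter (fun y => ∀ x ∈ S, ¬ Adj1 g x y))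
    rw [← hW] at h2
    omega
  obtain ⟨U0, hU0sub, hU0card⟩ := Finset.exists_subset_card_eq hWcard
  have hSD : σ₀ ≤ (S \ DelSet g).card := by
    have h2 := le_card_sdiff (DelSet g) S
    omega
  obtain ⟨S0, hS0sub, hS0card⟩ := Finset.exists_subset_card_eq hSD
  have hdisj : Disjoint S0 U0 := by
    rw [disjoint_left]
    intro x hx1 hx2
    have hxW := hU0sub hx2
    rw [hW, mem_sdiff] at hxW
    exact hxW.2 (mem_union_right _ ((sdiff_subset) (hS0sub hx1)))
  obtain ⟨x, hx, y, hy, hadj⟩ := hprop S0 U0 hS0card hU0card hdisj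
  have hxS : x ∈ S \ DelSet g := hS0sub hx
  rw [mem_sdiff] at hxS
  have hyW := hU0sub hy
  rw [hW, mem_sdiff, mem_filter] at hyW
  have hyD : y ∉ DelSet g := fun hyd => hyW.2 (mem_union_left _ hyd)
  exact hyW.1.2 x hxS.1 ⟨hadj, hxS.2, hyD⟩

end deletion

noncomputable section lambda

variable {N q : ℕ} (R : Fin q → Fin q → Prop)

def NonAdjSet (S : Finset (Fin q)) : Finset (Fin q) :=
  univ.filter (fun y => ∀ x ∈ S, ¬ R x y)

def LinkBad (A Bs : Finset (Fin N)) (ν : Fin N → Fin q) : Prop :=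
  ∀ a ∈ A, ∀ b ∈ Bs, ¬ R (ν a) (ν b)

lemma linkBad_count (σ u1 n : ℕ) (hσq : σ ≤ q)
    (hNB : ∀ S : Finset (Fin q), S.card = σ → (NonAdjSet R S).card ≤ u1)
    (A Bs : Finset (Fin N)) (hA : A.card = n) (hB : Bs.card = n) :
    (univ.filter (LinkBad R A Bs)).card ≤ q.choose σ * (σ ^ n + u1 ^ n) * q ^ (N - n) := by
  have hcover : ∀ ν : Fin N → Fin q, LinkBad R A Bs ν →
      (∃ T0 : Finset (Fin q), T0.card = σ ∧ ∀ a ∈ A, ν a ∈ T0) ∨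
      (∃ S : Finset (Fin q), S.card = σ ∧ ∀ b ∈ Bs, ν b ∈ NonAdjSet R S) := by
    intro ν hν
    by_cases him : σ ≤ (A.image ν).card
    · obtain ⟨S, hSsub, hScard⟩ := Finset.exists_subset_card_eq him
      refine Or.inr ⟨S, hScard, ?_⟩
      intro b hb
      rw [NonAdjSet, mem_filter]
      refine ⟨mem_univ _, ?_⟩
      intro x hx
      obtain ⟨a, ha, rfl⟩ := mem_image.1 (hSsub hx)
      exact hν a ha b hb
    · push_neg at him
      obtain ⟨T0, hT0sub, hT0card⟩ :=
        Finset.exists_superset_card_eq (le_of_lt him)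
          (by rw [Fintype.card_fin]; exact hσq)
      exact Or.inl ⟨T0, hT0card, fun a ha => hT0sub (mem_image_of_mem ν ha)⟩
  have hsplit : (univ.filter (LinkBad R A Bs)).card ≤
      (univ.filter (fun ν : Fin N → Fin q =>
        ∃ T0 : Finset (Fin q), T0.card = σ ∧ ∀ a ∈ A, ν a ∈ T0)).card +
      (univ.filter (fun ν : Fin N → Fin q =>
        ∃ S : Finset (Fin q), S.card = σ ∧ ∀ b ∈ Bs, ν b ∈ NonAdjSet R S)).card := by
    refine le_trans (card_le_card ?_) (card_union_le _ _)
    intro ν hν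
    rw [mem_filter] at hν
    rw [mem_union, mem_filter, mem_filter]
    rcases hcover ν hν.2 with h | h
    · exact Or.inl ⟨hν.1, h⟩
    · exact Or.inr ⟨hν.1, h⟩
  have h1 : (univ.filter (fun ν : Fin N → Fin q =>
      ∃ T0 : Finset (Fin q), T0.card = σ ∧ ∀ a ∈ A, ν a ∈ T0)).card
      ≤ q.choose σ * (σ ^ n * q ^ (N - n)) := by
    refine le_trans (card_filter_le_sum _ (univ.powersetCard σ)
      (fun T0 => univ.filter (fun ν : Fin N → Fin q => ∀ a ∈ A, ν a ∈ T0)) ?_) ?_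
    · rintro ν ⟨T0, hT0card, hT0⟩
      exact ⟨T0, mem_powersetCard_univ.2 hT0card, mem_filter.2 ⟨mem_univ _, hT0⟩⟩
    · refine le_trans (Finset.sum_le_sum (g := fun _ => σ ^ n * q ^ (N - n)) ?_) ?_
      · intro T0 hT0
        rw [mem_powersetCard_univ] at hT0
        calc (univ.filter (fun ν : Fin N → Fin q => ∀ a ∈ A, ν a ∈ T0)).card
            ≤ ∏ i : Fin N, (if i ∈ A then T0 else univ).card := by
              apply count_confined
              intro ν hν i
              by_cases hi : i ∈ A
              · rw [if_pos hi]; exact hν i hi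
              · rw [if_neg hi]; exact mem_univ _
          _ = ∏ i : Fin N, (if i ∈ A then σ else q) := by
              apply Finset.prod_congr rfl
              intro i _
              split
              · exact hT0
              · rw [card_univ, Fintype.card_fin]
          _ = σ ^ A.card * q ^ (Fintype.card (Fin N) - A.card) := prod_ite_card A σ q
          _ = σ ^ n * q ^ (N - n) := by rw [hA, Fintype.card_fin]
      · rw [Finset.sum_const, smul_eq_mul, card_powersetCard, card_univ, Fintype.card_fin]
  have h2 : (univ.filter (fun ν : Fin N → Fin q =>
      ∃ S : Finset (Fin q), S.card = σ ∧ ∀ b ∈ Bs, ν b ∈ NonAdjSet R S)).card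
      ≤ q.choose σ * (u1 ^ n * q ^ (N - n)) := by
    refine le_trans (card_filter_le_sum _ (univ.powersetCard σ)
      (fun S => univ.filter (fun ν : Fin N → Fin q => ∀ b ∈ Bs, ν b ∈ NonAdjSet R S)) ?_) ?_
    · rintro ν ⟨S, hScard, hS⟩
      exact ⟨S, mem_powersetCard_univ.2 hScard, mem_filter.2 ⟨mem_univ _, hS⟩⟩
    · refine le_trans (Finset.sum_le_sum (g := fun _ => u1 ^ n * q ^ (N - n)) ?_) ?_
      · intro S hS
        rw [mem_powersetCard_univ] at hS
        calc (univ.filter (fun ν : Fin N → Fin q => ∀ b ∈ Bs, ν b ∈ NonAdjSet R S)).card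
            ≤ ∏ i : Fin N, (if i ∈ Bs then NonAdjSet R S else univ).card := by
              apply count_confined
              intro ν hν i
              by_cases hi : i ∈ Bs
              · rw [if_pos hi]; exact hν i hi
              · rw [if_neg hi]; exact mem_univ _
          _ ≤ ∏ i : Fin N, (if i ∈ Bs then u1 else q) := by
              apply Finset.prod_le_prod'
              intro i _
              split
              · exact hNB S hS
              · rw [card_univ, Fintype.card_fin]
          _ = u1 ^ Bs.card * q ^ (Fintype.card (Fin N) - Bs.card) := prod_ite_card Bs u1 q
          _ = u1 ^ n * q ^ (N - n) := by rw [hB, Fintype.card_fin]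
      · rw [Finset.sum_const, smul_eq_mul, card_powersetCard, card_univ, Fintype.card_fin]
  calc (univ.filter (LinkBad R A Bs)).card
      ≤ q.choose σ * (σ ^ n * q ^ (N - n)) + q.choose σ * (u1 ^ n * q ^ (N - n)) := by
        refine le_trans hsplit ?_
        exact Nat.add_le_add h1 h2
    _ = q.choose σ * (σ ^ n + u1 ^ n) * q ^ (N - n) := by ring

end lambda

noncomputable section lambda2

variable {N q : ℕ}

def BadAt (R : Fin q → Fin q → Prop) (A Bs C3 : Finset (Fin N)) (lam : Fin N → Fin N → Fin q) :
    Prop := ∀ c ∈ C3, LinkBad R A Bs (lam c)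

lemma badAt_count (R : Fin q → Fin q → Prop) (A Bs C3 : Finset (Fin N)) (n : ℕ)
    (hC : C3.card = n) :
    (univ.filter (BadAt R A Bs C3)).card
      ≤ ((univ.filter (LinkBad R A Bs)).card) ^ n * (q ^ N) ^ (N - n) := by
  calc (univ.filter (BadAt R A Bs C3)).card
      ≤ ∏ c : Fin N, (if c ∈ C3 then univ.filter (LinkBad R A Bs) else univ).card := by
        apply count_confined
        intro lam hlam c
        by_cases hc : c ∈ C3
        · rw [if_pos hc]
          exact mem_filter.2 ⟨mem_univ _, hlam c hc⟩
        · rw [if_neg hc]; exact mem_univ _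
    _ = ∏ c : Fin N, (if c ∈ C3 then (univ.filter (LinkBad R A Bs)).card else q ^ N) := by
        apply Finset.prod_congr rfl
        intro c _
        split
        · rfl
        · rw [card_univ, Fintype.card_fun, Fintype.card_fin, Fintype.card_fin]
    _ = ((univ.filter (LinkBad R A Bs)).card) ^ C3.card * (q ^ N) ^ (Fintype.card (Fin N) - C3.card) :=
        prod_ite_card C3 _ _
    _ = ((univ.filter (LinkBad R A Bs)).card) ^ n * (q ^ N) ^ (N - n) := by
        rw [hC, Fintype.card_fin]

lemma good_lambda_exists (R : Fin q → Fin q → Prop) (σ u1 n : ℕ) (hσq : σ ≤ q) (hq : 1 ≤ q)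
    (hnN : n ≤ N)
    (hNB : ∀ S : Finset (Fin q), S.card = σ → (NonAdjSet R S).card ≤ u1)
    (H4 : (N.choose n) ^ 3 * (q.choose σ * (σ ^ n + u1 ^ n)) ^ n < q ^ (n * n)) :
    ∃ lam : Fin N → Fin N → Fin q, ∀ A Bs C3 : Finset (Fin N),
      A.card = n → Bs.card = n → C3.card = n →
      ∃ c ∈ C3, ∃ a ∈ A, ∃ b ∈ Bs, R (lam c a) (lam c b) := by
  set K1 := q.choose σ * (σ ^ n + u1 ^ n) with hK1
  have hbad : (univ.filter (fun lam : Fin N → Fin N → Fin q =>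
      ∃ z : Finset (Fin N) × Finset (Fin N) × Finset (Fin N),
        z.1.card = n ∧ z.2.1.card = n ∧ z.2.2.card = n ∧ BadAt R z.1 z.2.1 z.2.2 lam)).card
      ≤ (N.choose n) * ((N.choose n) * (N.choose n))
        * ((K1 * q ^ (N - n)) ^ n * (q ^ N) ^ (N - n)) := by
    refine le_trans (card_filter_le_sum _
      ((univ.powersetCard n) ×ˢ (univ.powersetCard n) ×ˢ (univ.powersetCard n))
      (fun z => univ.filter (BadAt R z.1 z.2.1 z.2.2)) ?_) ?_
    · rintro lam ⟨z, hz1, hz2, hz3, hb⟩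
      refine ⟨z, ?_, mem_filter.2 ⟨mem_univ _, hb⟩⟩
      rw [mem_product, mem_product]
      exact ⟨mem_powersetCard_univ.2 hz1, mem_powersetCard_univ.2 hz2,
        mem_powersetCard_univ.2 hz3⟩
    · refine le_trans (Finset.sum_le_sum
        (g := fun _ => (K1 * q ^ (N - n)) ^ n * (q ^ N) ^ (N - n)) ?_) ?_
      · rintro ⟨A, Bs, C3⟩ hz
        rw [mem_product, mem_product] at hz
        obtain ⟨hzA, hzB, hzC⟩ := hz
        rw [mem_powersetCard_univ] at hzA hzB hzC
        dsimp only
        refine le_trans (badAt_count R A Bs C3 n hzC) ?_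
        apply Nat.mul_le_mul_right
        apply Nat.pow_le_pow_left
        have := linkBad_count R σ u1 n hσq hNB A Bs hzA hzB
        rw [hK1]
        exact this
      · rw [Finset.sum_const, smul_eq_mul, card_product, card_product, card_powersetCard,
          card_univ, Fintype.card_fin]
  have hcardΩ : Fintype.card (Fin N → Fin N → Fin q) = (q ^ N) ^ N := by
    rw [Fintype.card_fun]
    congr 1
    rw [Fintype.card_fun, Fintype.card_fin, Fintype.card_fin]
    rw [Fintype.card_fin]
  have hlt : (univ.filter (fun lam : Fin N → Fin N → Fin q =>
      ∃ z : Finset (Fin N) × Finset (Fin N) × Finset (Fin N),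
        z.1.card = n ∧ z.2.1.card = n ∧ z.2.2.card = n ∧ BadAt R z.1 z.2.1 z.2.2 lam)).card
      < Fintype.card (Fin N → Fin N → Fin q) := by
    rw [hcardΩ]
    refine lt_of_le_of_lt hbad ?_
    obtain ⟨d, rfl⟩ : ∃ d, N = n + d := ⟨N - n, (Nat.add_sub_cancel' hnN).symm⟩
    have hdn : n + d - n = d := by omega
    rw [hdn]
    have hqpos : 0 < q := hq
    have key : ((n + d).choose n) * (((n + d).choose n) * ((n + d).choose n)) * K1 ^ n
        < q ^ (n * n) := by
      have h3 : ((n + d).choose n) ^ 3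
          = ((n + d).choose n) * (((n + d).choose n) * ((n + d).choose n)) := by ring
      rw [h3] at H4
      exact H4
    have hE : 0 < q ^ (d * n + (n + d) * d) := Nat.pow_pos hqpos
    calc ((n + d).choose n) * (((n + d).choose n) * ((n + d).choose n))
          * ((K1 * q ^ d) ^ n * (q ^ (n + d)) ^ d)
        = (((n + d).choose n) * (((n + d).choose n) * ((n + d).choose n)) * K1 ^ n)
          * q ^ (d * n + (n + d) * d) := by
          rw [mul_pow, ← pow_mul, ← pow_mul, pow_add]
          ring
      _ < q ^ (n * n) * q ^ (d * n + (n + d) * d) := mul_lt_mul_of_pos_right key hE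
      _ = (q ^ (n + d)) ^ (n + d) := by
          rw [← pow_add, ← pow_mul]
          congr 1
          ring
  obtain ⟨lam, hlam⟩ := exists_not_bad _ hlt
  push_neg at hlam
  refine ⟨lam, ?_⟩
  intro A Bs C3 hA hB hC
  have := hlam (A, Bs, C3) hA hB hC
  rw [BadAt] at this
  push_neg at this
  obtain ⟨c, hc, hnl⟩ := this
  rw [LinkBad] at hnl
  push_neg at hnl
  obtain ⟨a, ha, b, hb, hr⟩ := hnl
  exact ⟨c, hc, a, ha, b, hb, hr⟩

end lambda2

section numerics

lemma pow3_lt_two_pow : ∀ m : ℕ, 100 ≤ m → 2 ^ 38 * (m + 1) ^ 3 < 2 ^ m := by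
  intro m hm
  induction m, hm using Nat.le_induction with
  | base => norm_num
  | succ m hm ih =>
    have hq1 : 100 * m ≤ m * m := Nat.mul_le_mul_right m hm
    have hq2 : 100 * (m * m) ≤ m * (m * m) := Nat.mul_le_mul_right (m * m) hm
    have h1 : (m + 2) ^ 3 ≤ 2 * (m + 1) ^ 3 := by nlinarith
    calc 2 ^ 38 * (m + 1 + 1) ^ 3 ≤ 2 ^ 38 * (2 * (m + 1) ^ 3) := by
          exact Nat.mul_le_mul_left _ h1
      _ = 2 * (2 ^ 38 * (m + 1) ^ 3) := by ring
      _ < 2 * 2 ^ m := by omega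
      _ = 2 ^ (m + 1) := by ring

lemma sqrt3_pow_le (n : ℕ) : (n.sqrt.sqrt.sqrt) ^ 8 ≤ n := by
  set s := n.sqrt.sqrt.sqrt with hs
  have h1 : s ^ 2 ≤ n.sqrt.sqrt := Nat.sqrt_le' _
  have h2 : n.sqrt.sqrt ^ 2 ≤ n.sqrt := Nat.sqrt_le' _
  have h3 : n.sqrt ^ 2 ≤ n := Nat.sqrt_le' _
  calc s ^ 8 = ((s ^ 2) ^ 2) ^ 2 := by ring
    _ ≤ (n.sqrt.sqrt ^ 2) ^ 2 := Nat.pow_le_pow_left (Nat.pow_le_pow_left h1 2) 2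
    _ ≤ n.sqrt ^ 2 := Nat.pow_le_pow_left h2 2
    _ ≤ n := h3

lemma lt_sqrt3_succ_pow (n : ℕ) : n < (n.sqrt.sqrt.sqrt + 1) ^ 8 := by
  set s := n.sqrt.sqrt.sqrt with hs
  have h1 : n.sqrt.sqrt < (s + 1) ^ 2 := Nat.lt_succ_sqrt' _
  have h2 : n.sqrt < (n.sqrt.sqrt + 1) ^ 2 := Nat.lt_succ_sqrt' _
  have h3 : n < (n.sqrt + 1) ^ 2 := Nat.lt_succ_sqrt' _
  have h4 : n.sqrt.sqrt + 1 ≤ (s + 1) ^ 2 := h1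
  have h5 : n.sqrt + 1 ≤ (n.sqrt.sqrt + 1) ^ 2 := h2
  calc n < (n.sqrt + 1) ^ 2 := h3
    _ ≤ ((n.sqrt.sqrt + 1) ^ 2) ^ 2 := Nat.pow_le_pow_left h5 2
    _ ≤ (((s + 1) ^ 2) ^ 2) ^ 2 := Nat.pow_le_pow_left (Nat.pow_le_pow_left h4 2) 2
    _ = (s + 1) ^ 8 := by ring

lemma bern0 : ∀ m : ℕ, 1 ≤ m → 2 * m ^ m ≤ (m + 1) ^ m := by
  intro m hm
  have key : ∀ j : ℕ, m ^ j * (m + j) ≤ (m + 1) ^ j * m := by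
    intro j
    induction j with
    | zero => simp
    | succ j ih =>
      calc m ^ (j + 1) * (m + (j + 1)) = m ^ j * (m * m + (j+1) * m) := by ring
        _ ≤ m ^ j * ((m + j) * (m + 1)) := by
            apply Nat.mul_le_mul_left
            nlinarith
        _ = (m ^ j * (m + j)) * (m + 1) := by ring
        _ ≤ ((m + 1) ^ j * m) * (m + 1) := Nat.mul_le_mul_right _ ih
        _ = (m + 1) ^ (j + 1) * m := by ring
  have h := key m
  have h2 : m ^ m * (m + m) = (2 * m ^ m) * m := by ring
  rw [h2] at h
  exact Nat.le_of_mul_le_mul_right h hm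

lemma bern (m E : ℕ) (hm : 1 ≤ m) : 2 ^ (E / m) * m ^ E ≤ (m + 1) ^ E := by
  have hdm := Nat.div_add_mod E m
  set k := E / m with hk
  set r := E % m with hr
  calc 2 ^ k * m ^ E = 2 ^ k * m ^ (m * k + r) := by rw [hdm]
    _ = 2 ^ k * (m ^ m) ^ k * m ^ r := by rw [pow_add, pow_mul]; ring
    _ = (2 * m ^ m) ^ k * m ^ r := by rw [mul_pow]
    _ ≤ ((m + 1) ^ m) ^ k * (m + 1) ^ r := by
        apply Nat.mul_le_mul
        · exact Nat.pow_le_pow_left (bern0 m hm) k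
        · exact Nat.pow_le_pow_left (by omega) r
    _ = (m + 1) ^ (m * k + r) := by rw [pow_add, pow_mul]
    _ = (m + 1) ^ E := by rw [hdm]

end numerics

section hyps

lemma Ha_holds (s L q M T : ℕ) (hq : q = s ^ 5) (hM : M = s ^ 4 / L) (hT : T = s ^ 4 / 2)
    (hFL : 32 * L ^ 3 < s) (hL : 0 < L) (hs2 : 2 ≤ s) :
    2 * (q * q * q * M ^ (q * q - 3)) < (T + 1) * M ^ (q * q) := by
  have hspos : 0 < s := by omega
  have hLs : L ≤ s := by
    have h1 : L ≤ L ^ 3 := Nat.le_self_pow (by norm_num) L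
    omega
  have hM0 : 0 < M := by
    have h1 : s ^ 4 / s ≤ M := by
      rw [hM]; exact Nat.div_le_div_left hLs hL
    have h2 : s ^ 3 ≤ s ^ 4 / s := by
      apply Nat.le_div_iff_mul_le hspos |>.2
      calc s ^ 3 * s = s ^ 4 := by ring
        _ ≤ s ^ 4 := le_refl _
    have : 0 < s ^ 3 := Nat.pow_pos hspos
    omega
  have h2LM : s ^ 4 ≤ 2 * (L * M) := by
    have hdm := Nat.div_add_mod (s ^ 4) L
    have hmod : s ^ 4 % L < L := Nat.mod_lt _ hL
    have hss : 2 * s ≤ s * s := by nlinarith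
    have hs4 : s * s ≤ s ^ 4 := by
      calc s * s = s ^ 2 := by ring
        _ ≤ s ^ 4 := Nat.pow_le_pow_right (by omega) (by omega)
    rw [hM]
    omega
  have hT1 : s ^ 4 ≤ 2 * (T + 1) := by
    have hdm := Nat.div_add_mod (s ^ 4) 2
    rw [hT]
    omega
  have h1 : s ^ 16 ≤ (2 * (T + 1)) * (2 * (L * M)) ^ 3 := by
    calc s ^ 16 = s ^ 4 * (s ^ 4) ^ 3 := by ring
      _ ≤ (2 * (T + 1)) * (2 * (L * M)) ^ 3 := Nat.mul_le_mul hT1 (Nat.pow_le_pow_left h2LM 3)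
  have h1' : s ^ 16 ≤ 16 * L ^ 3 * ((T + 1) * M ^ 3) := by
    have he : (2 * (T + 1)) * (2 * (L * M)) ^ 3 = 16 * L ^ 3 * ((T + 1) * M ^ 3) := by ring
    rw [he] at h1
    exact h1
  have h3 : 16 * L ^ 3 * (2 * (q * q * q)) < s ^ 16 := by
    have he : 16 * L ^ 3 * (2 * (q * q * q)) = (32 * L ^ 3) * s ^ 15 := by rw [hq]; ring
    rw [he]
    calc (32 * L ^ 3) * s ^ 15 < s * s ^ 15 :=
          mul_lt_mul_of_pos_right hFL (Nat.pow_pos hspos)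
      _ = s ^ 16 := by ring
  have key : 2 * (q * q * q) < (T + 1) * M ^ 3 :=
    Nat.lt_of_mul_lt_mul_left (lt_of_lt_of_le h3 h1')
  have hqq3 : q * q = 3 + (q * q - 3) := by
    have h25 : 2 ≤ s ^ 5 := le_trans hs2 (Nat.le_self_pow (by norm_num) s)
    have : 3 ≤ q * q := by
      rw [hq]
      nlinarith
    omega
  calc 2 * (q * q * q * M ^ (q * q - 3)) = (2 * (q * q * q)) * M ^ (q * q - 3) := by ring
    _ < ((T + 1) * M ^ 3) * M ^ (q * q - 3) :=
        mul_lt_mul_of_pos_right key (Nat.pow_pos hM0)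
    _ = (T + 1) * (M ^ 3 * M ^ (q * q - 3)) := by ring
    _ = (T + 1) * M ^ (q * q) := by rw [← pow_add, ← hqq3]

lemma Hb_holds (s L q M σ₀ u T : ℕ) (hq : q = s ^ 5) (hM : M = s ^ 4 / L) (hT : T = s ^ 4 / 2)
    (hσ₀ : σ₀ = s ^ 4 - T) (hu : u = s ^ 4)
    (hLlog : 100 * (Nat.log 2 s + 1) ≤ L) (hLs : L ≤ s) (hM2 : 2 ≤ M) (hs2 : 2 ≤ s)
    (hL : 0 < L) :
    2 * (q.choose σ₀ * q.choose u * ((M - 1) ^ (σ₀ * u) * M ^ (q * q - σ₀ * u))) < M ^ (q * q) := by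
  have hspos : 0 < s := by omega
  set E := σ₀ * u with hE
  set k := E / (M - 1) with hk
  set ℓ := Nat.log 2 s with hℓ
  -- E ≤ q * q
  have hσ₀le : σ₀ ≤ s ^ 4 := by rw [hσ₀]; omega
  have hEqq : E ≤ q * q := by
    rw [hE, hq, hu]
    calc σ₀ * s ^ 4 ≤ s ^ 4 * s ^ 4 := Nat.mul_le_mul_right _ hσ₀le
      _ ≤ s ^ 5 * s ^ 5 := by
        apply Nat.mul_le_mul <;> exact Nat.pow_le_pow_right (by omega) (by omega)
  -- main reduced inequality
  have hmain : 2 * (q.choose σ₀ * q.choose u) * (M - 1) ^ E < M ^ E := by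
    -- choose bounds
    have hc1 : q.choose σ₀ ≤ q ^ σ₀ := Nat.choose_le_pow q σ₀
    have hc2 : q.choose u ≤ q ^ u := Nat.choose_le_pow q u
    have hsle : s ≤ 2 ^ (ℓ + 1) := le_of_lt (Nat.lt_pow_succ_log_self (by omega) s)
    have hqle : q ≤ 2 ^ (5 * (ℓ + 1)) := by
      rw [hq]
      calc s ^ 5 ≤ (2 ^ (ℓ + 1)) ^ 5 := Nat.pow_le_pow_left hsle 5
        _ = 2 ^ (5 * (ℓ + 1)) := by rw [← pow_mul, mul_comm]
    have hchoose : 2 * (q.choose σ₀ * q.choose u) ≤ 2 ^ (1 + 10 * s ^ 4 * (ℓ + 1)) := by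
      calc 2 * (q.choose σ₀ * q.choose u) ≤ 2 * (q ^ σ₀ * q ^ u) := by
            apply Nat.mul_le_mul_left
            exact Nat.mul_le_mul hc1 hc2
        _ = 2 * q ^ (σ₀ + u) := by rw [pow_add]
        _ ≤ 2 * (2 ^ (5 * (ℓ + 1))) ^ (σ₀ + u) := by
            apply Nat.mul_le_mul_left
            exact Nat.pow_le_pow_left hqle _
        _ = 2 ^ (1 + 5 * (ℓ + 1) * (σ₀ + u)) := by rw [← pow_mul, pow_add, pow_one]
        _ ≤ 2 ^ (1 + 10 * s ^ 4 * (ℓ + 1)) := by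
            apply Nat.pow_le_pow_right (by omega)
            have hσu : σ₀ + u ≤ 2 * s ^ 4 := by rw [hu]; omega
            have h56 : 5 * (ℓ + 1) * (σ₀ + u) ≤ 10 * (s ^ 4 * (ℓ + 1)) := by
              calc 5 * (ℓ + 1) * (σ₀ + u) ≤ 5 * (ℓ + 1) * (2 * s ^ 4) :=
                    Nat.mul_le_mul_left _ hσu
                _ = 10 * (s ^ 4 * (ℓ + 1)) := by ring
            have hrw : 10 * s ^ 4 * (ℓ + 1) = 10 * (s ^ 4 * (ℓ + 1)) := by ring
            omega
    -- k is large
    have hMLs : L * M ≤ s ^ 4 := by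
      rw [hM]
      exact Nat.mul_div_le _ _
    have hElarge : (s ^ 4 / 2) * (L * M) ≤ E := by
      have hσ₀ge : s ^ 4 / 2 ≤ σ₀ := by
        have := Nat.div_add_mod (s ^ 4) 2
        rw [hσ₀, hT]
        omega
      calc (s ^ 4 / 2) * (L * M) ≤ (s ^ 4 / 2) * s ^ 4 := Nat.mul_le_mul_left _ hMLs
        _ ≤ σ₀ * s ^ 4 := Nat.mul_le_mul_right _ hσ₀ge
        _ = E := by rw [hE, hu]
    have hkge : (s ^ 4 / 2) * L ≤ k := by
      have h1 : (s ^ 4 / 2) * L ≤ E / M := by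
        rw [Nat.le_div_iff_mul_le (by omega : 0 < M)]
        calc (s ^ 4 / 2) * L * M = (s ^ 4 / 2) * (L * M) := by ring
          _ ≤ E := hElarge
      have h2 : E / M ≤ E / (M - 1) := Nat.div_le_div_left (by omega) (by omega)
      rw [hk]
      omega
    have hkbig : 1 + 10 * s ^ 4 * (ℓ + 1) < k := by
      have hY5 : 5 ≤ s ^ 4 := by
        calc 5 ≤ 2 ^ 4 := by norm_num
          _ ≤ s ^ 4 := Nat.pow_le_pow_left hs2 4
      have ha : 40 * s ^ 4 ≤ 100 * (s ^ 4 / 2) := by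
        have := Nat.div_add_mod (s ^ 4) 2
        omega
      have hb : (s ^ 4 / 2) * (100 * (ℓ + 1)) ≤ (s ^ 4 / 2) * L := Nat.mul_le_mul_left _ hLlog
      have hchain : 40 * (s ^ 4 * (ℓ + 1)) ≤ (s ^ 4 / 2) * L := by
        calc 40 * (s ^ 4 * (ℓ + 1)) = (40 * s ^ 4) * (ℓ + 1) := by ring
          _ ≤ (100 * (s ^ 4 / 2)) * (ℓ + 1) := Nat.mul_le_mul_right _ ha
          _ = (s ^ 4 / 2) * (100 * (ℓ + 1)) := by ring
          _ ≤ (s ^ 4 / 2) * L := hb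
      have hf : 0 < s ^ 4 * (ℓ + 1) := Nat.mul_pos (Nat.pow_pos hspos) (by omega)
      have hrw : 10 * s ^ 4 * (ℓ + 1) = 10 * (s ^ 4 * (ℓ + 1)) := by ring
      omega
    have hpow2 : 2 * (q.choose σ₀ * q.choose u) < 2 ^ k := by
      calc 2 * (q.choose σ₀ * q.choose u) ≤ 2 ^ (1 + 10 * s ^ 4 * (ℓ + 1)) := hchoose
        _ < 2 ^ k := Nat.pow_lt_pow_right (by omega) hkbig
    have hbern : 2 ^ k * (M - 1) ^ E ≤ M ^ E := by
      have := bern (M - 1) E (by omega)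
      rwa [Nat.sub_add_cancel (by omega : 1 ≤ M)] at this
    calc 2 * (q.choose σ₀ * q.choose u) * (M - 1) ^ E
        < 2 ^ k * (M - 1) ^ E := by
          apply mul_lt_mul_of_pos_right hpow2
          exact Nat.pow_pos (by omega)
      _ ≤ M ^ E := hbern
  have hqqE : q * q = E + (q * q - E) := by omega
  calc 2 * (q.choose σ₀ * q.choose u * ((M - 1) ^ E * M ^ (q * q - E)))
      = (2 * (q.choose σ₀ * q.choose u) * (M - 1) ^ E) * M ^ (q * q - E) := by ring
    _ < M ^ E * M ^ (q * q - E) :=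
        mul_lt_mul_of_pos_right hmain (Nat.pow_pos (by omega))
    _ = M ^ (q * q) := by rw [← pow_add, ← hqqE]

end hyps

section h4

lemma H4_holds (n s q N σ u1 : ℕ) (hs2 : 1296 ≤ s) (hn16 : n ≤ s ^ 16) (hns8 : s ^ 8 ≤ n)
    (h100 : 100 ≤ n) (hq : q = s ^ 5) (hN : N = n ^ (n / 100)) (hσ : σ = s ^ 4)
    (hu1 : u1 ≤ 3 * s ^ 4) (hσu : σ ≤ u1) :
    (N.choose n) ^ 3 * (q.choose σ * (σ ^ n + u1 ^ n)) ^ n < q ^ (n * n) := by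
  have hspos : 0 < s := by omega
  set e1 := 48 * (n / 100) * n with he1
  set e2 := 5 * s ^ 4 * n with he2
  have h2e1 : 2 * e1 ≤ n * n := by
    have h1 : n / 100 ≤ n / 96 := Nat.div_le_div_left (by norm_num) (by norm_num)
    have h2 : 96 * (n / 96) ≤ n := by
      have := Nat.div_mul_le_self n 96
      omega
    have h3 : 96 * (n / 100) ≤ n := by omega
    calc 2 * e1 = (96 * (n / 100)) * n := by rw [he1]; ring
      _ ≤ n * n := Nat.mul_le_mul_right _ h3
  have h100s : 100 * s ^ 4 ≤ n := by
    have h1 : 100 ≤ s ^ 4 := by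
      calc 100 ≤ 1296 := by norm_num
        _ ≤ s := hs2
        _ ≤ s ^ 4 := Nat.le_self_pow (by norm_num) s
    calc 100 * s ^ 4 ≤ s ^ 4 * s ^ 4 := Nat.mul_le_mul_right _ h1
      _ = s ^ 8 := by ring
      _ ≤ n := hns8
  have h20e2 : 20 * e2 ≤ n * n := by
    calc 20 * e2 = (100 * s ^ 4) * n := by rw [he2]; ring
      _ ≤ n * n := Nat.mul_le_mul_right _ h100s
  have he12 : e1 + e2 ≤ n * n := by omega
  set E3 := n * n - e1 - e2 with hE3
  have hnn5 : 5 ≤ n * n := by nlinarith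
  have h4E3 : n * n < 4 * E3 := by omega
  -- bound pieces
  have hb1 : (N.choose n) ^ 3 ≤ s ^ e1 := by
    have h1 : N.choose n ≤ N ^ n := Nat.choose_le_pow N n
    have h2 : N ≤ s ^ (16 * (n / 100)) := by
      rw [hN]
      calc n ^ (n / 100) ≤ (s ^ 16) ^ (n / 100) := Nat.pow_le_pow_left hn16 _
        _ = s ^ (16 * (n / 100)) := by rw [← pow_mul]
    calc (N.choose n) ^ 3 ≤ (N ^ n) ^ 3 := Nat.pow_le_pow_left h1 3
      _ ≤ ((s ^ (16 * (n / 100))) ^ n) ^ 3 :=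
          Nat.pow_le_pow_left (Nat.pow_le_pow_left h2 n) 3
      _ = s ^ (16 * (n / 100) * n * 3) := by rw [← pow_mul, ← pow_mul]; congr 1; ring
      _ = s ^ e1 := by rw [he1]; ring_nf
  have hb2 : (q.choose σ) ^ n ≤ s ^ e2 := by
    have h1 : q.choose σ ≤ q ^ σ := Nat.choose_le_pow q σ
    calc (q.choose σ) ^ n ≤ (q ^ σ) ^ n := Nat.pow_le_pow_left h1 n
      _ = s ^ (5 * s ^ 4 * n) := by rw [hq, hσ, ← pow_mul, ← pow_mul]; congr 1; ring
      _ = s ^ e2 := by rw [he2]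
  have hb3 : ((σ ^ n + u1 ^ n)) ^ n ≤ 2 ^ n * (3 * s ^ 4) ^ (n * n) := by
    have h1 : σ ^ n + u1 ^ n ≤ 2 * (3 * s ^ 4) ^ n := by
      have hσ3 : σ ≤ 3 * s ^ 4 := by rw [hσ]; omega
      have h2 : σ ^ n ≤ (3 * s ^ 4) ^ n := Nat.pow_le_pow_left hσ3 n
      have h3 : u1 ^ n ≤ (3 * s ^ 4) ^ n := Nat.pow_le_pow_left hu1 n
      omega
    calc (σ ^ n + u1 ^ n) ^ n ≤ (2 * (3 * s ^ 4) ^ n) ^ n := Nat.pow_le_pow_left h1 n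
      _ = 2 ^ n * (3 * s ^ 4) ^ (n * n) := by rw [mul_pow, ← pow_mul]
  -- the 6^ bound
  have h6 : 2 ^ n * 3 ^ (n * n) < s ^ E3 := by
    have h1 : 2 ^ n * 3 ^ (n * n) ≤ 6 ^ (n * n) := by
      have h2 : 2 ^ n ≤ 2 ^ (n * n) := Nat.pow_le_pow_right (by norm_num) (by nlinarith)
      calc 2 ^ n * 3 ^ (n * n) ≤ 2 ^ (n * n) * 3 ^ (n * n) := Nat.mul_le_mul_right _ h2
        _ = 6 ^ (n * n) := by rw [← mul_pow]; norm_num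
    have h2 : (6 : ℕ) ^ (n * n) < 6 ^ (4 * E3) := Nat.pow_lt_pow_right (by norm_num) h4E3
    have h3 : (6 : ℕ) ^ (4 * E3) ≤ s ^ E3 := by
      calc (6 : ℕ) ^ (4 * E3) = (6 ^ 4) ^ E3 := by rw [← pow_mul]
        _ ≤ s ^ E3 := Nat.pow_le_pow_left (by norm_num; omega) E3
    omega
  -- assemble
  have hsplit : e1 + e2 + E3 + 4 * (n * n) = 5 * (n * n) := by omega
  have hpos1 : 0 < s ^ e1 := Nat.pow_pos hspos
  have hpos2 : 0 < s ^ e2 := Nat.pow_pos hspos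
  calc (N.choose n) ^ 3 * (q.choose σ * (σ ^ n + u1 ^ n)) ^ n
      = (N.choose n) ^ 3 * ((q.choose σ) ^ n * (σ ^ n + u1 ^ n) ^ n) := by rw [mul_pow]
    _ ≤ s ^ e1 * (s ^ e2 * (2 ^ n * (3 * s ^ 4) ^ (n * n))) := by
        apply Nat.mul_le_mul hb1
        exact Nat.mul_le_mul hb2 hb3
    _ = (s ^ e1 * s ^ e2 * s ^ (4 * (n * n))) * (2 ^ n * 3 ^ (n * n)) := by
        rw [mul_pow, ← pow_mul]
        ring
    _ < (s ^ e1 * s ^ e2 * s ^ (4 * (n * n))) * s ^ E3 := by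
        apply mul_lt_mul_of_pos_left h6
        exact Nat.mul_pos (Nat.mul_pos hpos1 hpos2) (Nat.pow_pos hspos)
    _ = s ^ (e1 + e2 + 4 * (n * n) + E3) := by rw [← pow_add, ← pow_add, ← pow_add]
    _ = s ^ (5 * (n * n)) := by rw [← hsplit]; ring_nf
    _ = q ^ (n * n) := by rw [hq, ← pow_mul]

end h4

section sorting
variable {α : Type*} [LinearOrder α] [DecidableEq α]

lemma sort3 {e : Finset α} (h : e.card = 3) :
    ∃ a b c : α, a < b ∧ b < c ∧ e = {a, b, c} := by
  obtain ⟨a, b, c, hab, hac, hbc, rfl⟩ := Finset.card_eq_three.1 h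
  have heq : ∀ x y z : α, ({a, b, c} : Finset α) = {x, y, z} ∨ ¬ ({a,b,c} : Finset α) = {x,y,z} := fun _ _ _ => Classical.em _
  rcases lt_trichotomy a b with h1 | h1 | h1
  · rcases lt_trichotomy b c with h2 | h2 | h2
    · exact ⟨a, b, c, h1, h2, rfl⟩
    · exact absurd h2 hbc
    · rcases lt_trichotomy a c with h3 | h3 | h3
      · exact ⟨a, c, b, h3, h2, by ext x; simp; tauto⟩
      · exact absurd h3 hac
      · exact ⟨c, a, b, h3, h1, by ext x; simp; tauto⟩
  · exact absurd h1 hab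
  · rcases lt_trichotomy a c with h2 | h2 | h2
    · exact ⟨b, a, c, h1, h2, by ext x; simp; tauto⟩
    · exact absurd h2 hac
    · rcases lt_trichotomy b c with h3 | h3 | h3
      · exact ⟨b, c, a, h3, h2, by ext x; simp; tauto⟩
      · exact absurd h3 hbc
      · exact ⟨c, b, a, h3, h1, by ext x; simp; tauto⟩

lemma sort3_inj {a b c a' b' c' : α} (h1 : a < b) (h2 : b < c) (h1' : a' < b') (h2' : b' < c')
    (H : ({a, b, c} : Finset α) = {a', b', c'}) : a = a' ∧ b = b' ∧ c = c' := by
  have mem1 : ∀ x : α, x ∈ ({a, b, c} : Finset α) ↔ (x = a ∨ x = b ∨ x = c) := by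
    intro x; simp
  have mem2 : ∀ x : α, x ∈ ({a', b', c'} : Finset α) ↔ (x = a' ∨ x = b' ∨ x = c') := by
    intro x; simp
  have Ha : a = a' ∨ a = b' ∨ a = c' := by
    have : a ∈ ({a', b', c'} : Finset α) := H ▸ (by simp)
    simpa using this
  have Hb : b = a' ∨ b = b' ∨ b = c' := by
    have : b ∈ ({a', b', c'} : Finset α) := H ▸ (by simp)
    simpa using this
  have Hc : c = a' ∨ c = b' ∨ c = c' := by
    have : c ∈ ({a', b', c'} : Finset α) := H ▸ (by simp)
    simpa using this
  have Ha' : a' = a ∨ a' = b ∨ a' = c := by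
    have : a' ∈ ({a, b, c} : Finset α) := H.symm ▸ (by simp)
    simpa using this
  have Hc' : c' = a ∨ c' = b ∨ c' = c := by
    have : c' ∈ ({a, b, c} : Finset α) := H.symm ▸ (by simp)
    simpa using this
  have haa : a = a' := by
    have h3 : a' ≤ a := by rcases Ha with rfl | rfl | rfl <;> [exact le_refl _; exact le_of_lt h1'; exact le_of_lt (h1'.trans h2')] <;> skip
    have h4 : a ≤ a' := by rcases Ha' with rfl | rfl | rfl <;> [exact le_refl _; exact le_of_lt h1; exact le_of_lt (h1.trans h2)] <;> skip
    exact le_antisymm h4 h3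
  have hcc : c = c' := by
    have h3 : c' ≤ c := by rcases Hc' with rfl | rfl | rfl <;> [exact le_of_lt (h1.trans h2); exact le_of_lt h2; exact le_refl _] <;> skip
    have h4 : c ≤ c' := by rcases Hc with rfl | rfl | rfl <;> [exact le_of_lt (h1'.trans h2'); exact le_of_lt h2'; exact le_refl _] <;> skip
    exact le_antisymm h4 h3
  refine ⟨haa, ?_, hcc⟩
  rcases Hb with rfl | rfl | rfl
  · exact absurd (haa ▸ h1) (lt_irrefl _)
  · rfl
  · exact absurd (hcc ▸ h2) (lt_irrefl _)

lemma image3 {β : Type*} [DecidableEq α] [DecidableEq β] (φ : α → β) (a b c : α) :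
    ({a, b, c} : Finset α).image φ = {φ a, φ b, φ c} := by
  simp [Finset.image_insert]

end sorting

section mainconstruction

theorem construction (n : ℕ) (hn : 2 ^ 801 ≤ n) :
    ∃ col : Finset (Fin (n ^ (n / 100))) → Bool,
      (∀ w x y z : Fin (n ^ (n / 100)), w < x → x < y → y < z →
        ¬(col {w, x, z} = true ∧ col {w, y, z} = true ∧ col {x, y, z} = true)) ∧
      (∀ A Bs C3 : Finset (Fin (n ^ (n / 100))), A.card = n → Bs.card = n → C3.card = n →
        ∃ c ∈ C3, ∃ a ∈ A, ∃ b ∈ Bs, (a < b → b < c → col {a, b, c} = true)) := by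
  set N := n ^ (n / 100) with hN
  set s := n.sqrt.sqrt.sqrt with hs
  set L := 100 * (Nat.log 2 n + 1) with hL
  set M := s ^ 4 / L with hM
  set q := s ^ 5 with hq
  set T := s ^ 4 / 2 with hT
  set σ₀ := s ^ 4 - T with hσ₀
  set u1 := s ^ 4 + T + s ^ 4 with hu1
  have hLpos : 0 < L := by positivity
  -- basic size facts
  have hs8 : s ^ 8 ≤ n := sqrt3_pow_le n
  have hslt : n < (s + 1) ^ 8 := lt_sqrt3_succ_pow n
  have hsbig : 2 ^ 100 ≤ s := by
    by_contra hc
    push_neg at hc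
    have h1 : (s + 1) ^ 8 ≤ (2 ^ 100) ^ 8 := Nat.pow_le_pow_left (by omega) 8
    have h2 : ((2 : ℕ) ^ 100) ^ 8 = 2 ^ 800 := by rw [← pow_mul]
    have h3 : (2 : ℕ) ^ 800 < 2 ^ 801 := Nat.pow_lt_pow_right (by norm_num) (by norm_num)
    omega
  have hs2 : 2 ≤ s := le_trans (by norm_num) hsbig
  have hn16 : n ≤ s ^ 16 := by
    have h1 : (s + 1) ^ 8 ≤ (2 * s) ^ 8 := Nat.pow_le_pow_left (by omega) 8
    have h2 : (2 * s) ^ 8 = 2 ^ 8 * s ^ 8 := by rw [mul_pow]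
    have h3 : (2 : ℕ) ^ 8 ≤ s ^ 8 := Nat.pow_le_pow_left hs2 8
    have h4 : 2 ^ 8 * s ^ 8 ≤ s ^ 8 * s ^ 8 := Nat.mul_le_mul_right _ h3
    have h5 : s ^ 8 * s ^ 8 = s ^ 16 := by ring
    omega
  have hℓs : 100 ≤ Nat.log 2 s := by
    have := Nat.log_mono_right (b := 2) hsbig
    rwa [Nat.log_pow (by norm_num)] at this
  have hFL : 32 * L ^ 3 < s := by
    have hln : Nat.log 2 n ≤ 16 * Nat.log 2 s + 16 := by
      have h1 : n ≤ 2 ^ (16 * Nat.log 2 s + 16) := by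
        have h2 : s ≤ 2 ^ (Nat.log 2 s + 1) := le_of_lt (Nat.lt_pow_succ_log_self (by norm_num) s)
        calc n ≤ s ^ 16 := hn16
          _ ≤ (2 ^ (Nat.log 2 s + 1)) ^ 16 := Nat.pow_le_pow_left h2 16
          _ = 2 ^ (16 * Nat.log 2 s + 16) := by rw [← pow_mul]; congr 1; ring
      calc Nat.log 2 n ≤ Nat.log 2 (2 ^ (16 * Nat.log 2 s + 16)) := Nat.log_mono_right h1
        _ = 16 * Nat.log 2 s + 16 := Nat.log_pow (b := 2) (by norm_num) _
    have hL17 : L ≤ 1700 * (Nat.log 2 s + 1) := by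
      rw [hL]
      have : Nat.log 2 n + 1 ≤ 17 * (Nat.log 2 s + 1) := by omega
      calc 100 * (Nat.log 2 n + 1) ≤ 100 * (17 * (Nat.log 2 s + 1)) := Nat.mul_le_mul_left _ this
        _ = 1700 * (Nat.log 2 s + 1) := by ring
    have hcube : 32 * L ^ 3 ≤ 2 ^ 38 * (Nat.log 2 s + 1) ^ 3 := by
      calc 32 * L ^ 3 ≤ 32 * (1700 * (Nat.log 2 s + 1)) ^ 3 :=
            Nat.mul_le_mul_left _ (Nat.pow_le_pow_left hL17 3)
        _ = (32 * 1700 ^ 3) * (Nat.log 2 s + 1) ^ 3 := by ring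
        _ ≤ 2 ^ 38 * (Nat.log 2 s + 1) ^ 3 := Nat.mul_le_mul_right _ (by norm_num)
    have hp3 := pow3_lt_two_pow (Nat.log 2 s) hℓs
    have hps := Nat.pow_log_le_self 2 (by omega : s ≠ 0)
    calc 32 * L ^ 3 ≤ 2 ^ 38 * (Nat.log 2 s + 1) ^ 3 := hcube
      _ < 2 ^ Nat.log 2 s := hp3
      _ ≤ s := hps
  have hLlogs : 100 * (Nat.log 2 s + 1) ≤ L := by
    rw [hL]
    have hsn : s ≤ n := le_trans (Nat.le_self_pow (by norm_num) s) hs8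
    have : Nat.log 2 s ≤ Nat.log 2 n := Nat.log_mono_right hsn
    omega
  have hLs : L ≤ s := by
    have h1 : L ≤ L ^ 3 := Nat.le_self_pow (by norm_num) L
    omega
  have hM2 : 2 ≤ M := by
    have h1 : s ^ 4 / s ≤ M := by rw [hM]; exact Nat.div_le_div_left hLs hLpos
    have h2 : s ^ 3 ≤ s ^ 4 / s := by
      apply (Nat.le_div_iff_mul_le (by omega)).2
      calc s ^ 3 * s = s ^ 4 := by ring
        _ ≤ s ^ 4 := le_refl _
    have h3 : 2 ≤ s ^ 3 := le_trans hs2 (Nat.le_self_pow (by norm_num) s)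
    omega
  -- graph existence
  have Ha := Ha_holds s L q M T hq hM hT hFL hLpos hs2
  have Hb := Hb_holds s L q M σ₀ (s ^ 4) T hq hM hT hσ₀ rfl hLlogs hLs hM2 hs2 hLpos
  obtain ⟨g, hgTri, hgProp⟩ := graph_exists (q := q) (M := M) σ₀ (s ^ 4) T (by omega) Ha Hb
  have hσsum : σ₀ + T ≤ s ^ 4 := by
    have := Nat.div_add_mod (s ^ 4) 2
    rw [hσ₀, hT]
    omega
  have hNB := nonadj_bound σ₀ (s ^ 4) T (s ^ 4) hgTri hgProp hσsum
  have hNB' : ∀ S : Finset (Fin q), S.card = s ^ 4 → (NonAdjSet (Adj1 g) S).card ≤ u1 := by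
    intro S hS
    have := hNB S hS
    rw [hu1]
    calc (NonAdjSet (Adj1 g) S).card
        = (univ.filter (fun y => ∀ x ∈ S, ¬ Adj1 g x y)).card := rfl
      _ ≤ s ^ 4 + T + s ^ 4 := this
  -- H4
  have hn100 : 100 ≤ n := by
    have : (100 : ℕ) ≤ 2 ^ 801 := le_trans (by norm_num : (100 : ℕ) ≤ 2 ^ 7) (Nat.pow_le_pow_right (by norm_num) (by norm_num))
    omega
  have hTle : T ≤ s ^ 4 := by rw [hT]; exact Nat.div_le_self _ _
  have H4 := H4_holds n s q N (s ^ 4) u1 (by omega) hn16 hs8 hn100 hq hN rfl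
    (by rw [hu1]; omega) (by rw [hu1]; omega)
  have hσq : s ^ 4 ≤ q := by
    rw [hq]
    exact Nat.pow_le_pow_right (by omega) (by norm_num)
  have hq1 : 1 ≤ q := by
    have : 0 < s ^ 5 := by positivity
    rw [hq]; omega
  have hnN : n ≤ N := by
    rw [hN]
    have h1 : 1 ≤ n / 100 := by omega
    calc n = n ^ 1 := (pow_one n).symm
      _ ≤ n ^ (n / 100) := Nat.pow_le_pow_right (by omega) h1
  obtain ⟨lam, hlam⟩ := good_lambda_exists (N := N) (Adj1 g) (s ^ 4) u1 n hσq hq1 hnN hNB' H4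
  -- define the coloring
  set col : Finset (Fin N) → Bool := fun e =>
    if (∃ x y z : Fin N, x < y ∧ y < z ∧ e = {x, y, z} ∧ Adj1 g (lam z x) (lam z y))
    then true else false with hcol
  have hcol_iff : ∀ e, col e = true ↔
      ∃ x y z : Fin N, x < y ∧ y < z ∧ e = {x, y, z} ∧ Adj1 g (lam z x) (lam z y) := by
    intro e
    by_cases h : ∃ x y z : Fin N, x < y ∧ y < z ∧ e = {x, y, z} ∧ Adj1 g (lam z x) (lam z y)
    · simp only [hcol]
      rw [if_pos h]
      simpa using h
    · simp only [hcol]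
      rw [if_neg h]
      simpa using h
  refine ⟨col, ?_, ?_⟩
  · -- no red triangle-pattern
    intro w x y z hwx hxy hyz h3
    obtain ⟨c1, c2, c3⟩ := h3
    rw [hcol_iff] at c1 c2 c3
    obtain ⟨a1, b1, d1, hab1, hbd1, heq1, hadj1⟩ := c1
    obtain ⟨a2, b2, d2, hab2, hbd2, heq2, hadj2⟩ := c2
    obtain ⟨a3, b3, d3, hab3, hbd3, heq3, hadj3⟩ := c3
    obtain ⟨e1, e2, e3⟩ := sort3_inj hab1 hbd1 hwx (hxy.trans hyz) heq1.symm
    obtain ⟨f1, f2, f3⟩ := sort3_inj hab2 hbd2 (hwx.trans hxy) hyz heq2.symm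
    obtain ⟨g1, g2, g3⟩ := sort3_inj hab3 hbd3 hxy hyz heq3.symm
    subst e1; subst e2; subst e3
    subst f1; subst f2; subst f3
    subst g1; subst g2; subst g3
    exact adj1_trianglefree hadj1 hadj2 hadj3
  · -- hitting property
    intro A Bs C3 hA hB hC
    obtain ⟨c, hc, a, ha, b, hb, hr⟩ := hlam A Bs C3 hA hB hC
    refine ⟨c, hc, a, ha, b, hb, ?_⟩
    intro hab hbc
    rw [hcol_iff]
    exact ⟨a, b, c, hab, hbc, rfl, hr⟩

end mainconstruction

section assembly

lemma exists_mem_ordSet (t n : ℕ) : ∃ N0 : ℕ, ∀ c : Finset (Fin N0) → Bool,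
    (∃ f : Fin (t + 1) → Fin N0, StrictMono f ∧
      ∀ e, completeH3 (t + 1) e → c (e.image f) = true) ∨
    (∃ g : Fin (3 * n) → Fin N0, StrictMono g ∧ ∀ e, K33 n e → c (e.image g) = false) := by
  obtain ⟨R3, hR3⟩ := ramsey3 (α := ℕ) (t + 1) (3 * n)
  refine ⟨max R3 1, ?_⟩
  set N0 := max R3 1 with hN0
  intro c
  have hN0pos : 0 < N0 := by omega
  set φ : ℕ → Fin N0 := fun m => if h : m < N0 then (⟨m, h⟩ : Fin N0) else ⟨0, hN0pos⟩ with hφ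
  set cN : Finset ℕ → Bool := fun e => c (e.image φ) with hcN
  have hcard : R3 ≤ (Finset.range N0).card := by rw [Finset.card_range]; omega
  rcases hR3 (Finset.range N0) cN hcard with ⟨S', hsub, hcardS, hmono⟩ | ⟨S', hsub, hcardS, hmono⟩
  · -- red clique of size t+1
    left
    set e0 := S'.orderIsoOfFin hcardS with he0
    have hltN : ∀ i : Fin (t + 1), ((e0 i : ℕ)) < N0 := by
      intro i
      have := hsub (e0 i).2
      rwa [Finset.mem_range] at this
    set f : Fin (t + 1) → Fin N0 := fun i => ⟨(e0 i : ℕ), hltN i⟩ with hf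
    have hfmono : StrictMono f := by
      intro i j hij
      have h1 : e0 i < e0 j := (OrderIso.lt_iff_lt e0).2 hij
      exact h1
    refine ⟨f, hfmono, ?_⟩
    intro e he
    obtain ⟨i, j, k, hij, hjk, rfl⟩ := sort3 (α := Fin (t + 1)) he
    rw [image3]
    have hphi : ∀ i : Fin (t + 1), φ ((e0 i : ℕ)) = f i := by
      intro i
      rw [hφ]
      simp only [hltN i, dif_pos]
      rfl
    have key : cN {(e0 i : ℕ), (e0 j : ℕ), (e0 k : ℕ)} = true := by
      apply hmono
      · exact (e0 i).2
      · exact (e0 j).2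
      · exact (e0 k).2
      · exact (OrderIso.lt_iff_lt e0).2 hij
      · exact (OrderIso.lt_iff_lt e0).2 hjk
    rw [hcN] at key
    simp only at key
    rw [image3] at key
    rw [hphi, hphi, hphi] at key
    exact key
  · -- blue clique of size 3n
    right
    set e0 := S'.orderIsoOfFin hcardS with he0
    have hltN : ∀ i : Fin (3 * n), ((e0 i : ℕ)) < N0 := by
      intro i
      have := hsub (e0 i).2
      rwa [Finset.mem_range] at this
    set g : Fin (3 * n) → Fin N0 := fun i => ⟨(e0 i : ℕ), hltN i⟩ with hg
    have hgmono : StrictMono g := by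
      intro i j hij
      exact (OrderIso.lt_iff_lt e0).2 hij
    refine ⟨g, hgmono, ?_⟩
    intro e he
    obtain ⟨a, b, d, ha, hb1, hb2, hd, rfl⟩ := he
    have hab : a < b := by
      rw [Fin.lt_def]; omega
    have hbd : b < d := by
      rw [Fin.lt_def]; omega
    rw [image3]
    have hphi : ∀ i : Fin (3 * n), φ ((e0 i : ℕ)) = g i := by
      intro i
      rw [hφ]
      simp only [hltN i, dif_pos]
      rfl
    have key : cN {(e0 a : ℕ), (e0 b : ℕ), (e0 d : ℕ)} = false := by
      apply hmono
      · exact (e0 a).2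
      · exact (e0 b).2
      · exact (e0 d).2
      · exact (OrderIso.lt_iff_lt e0).2 hab
      · exact (OrderIso.lt_iff_lt e0).2 hbd
    rw [hcN] at key
    simp only at key
    rw [image3] at key
    rw [hphi, hphi, hphi] at key
    exact key

end assembly

section final

lemma construction_blocks (t n : ℕ) (ht : 3 ≤ t) (hn : 2 ^ 801 ≤ n) (N' : ℕ)
    (hle : N' ≤ n ^ (n / 100)) :
    ∃ c : Finset (Fin N') → Bool,
      ¬(∃ f : Fin (t + 1) → Fin N', StrictMono f ∧
          ∀ e, completeH3 (t + 1) e → c (e.image f) = true) ∧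
      ¬(∃ g : Fin (3 * n) → Fin N', StrictMono g ∧ ∀ e, K33 n e → c (e.image g) = false) := by
  obtain ⟨col, hP1, hP2⟩ := construction n hn
  have hnpos : 0 < n := lt_of_lt_of_le (by positivity) hn
  refine ⟨fun e => col (e.image (Fin.castLE hle)), ?_, ?_⟩
  · rintro ⟨f, hf, hred⟩
    have h1t : 1 < t + 1 := by omega
    have h2t : 2 < t + 1 := by omega
    have h3t : 3 < t + 1 := by omega
    have hcard : ∀ a b c : Fin (t + 1), a < b → b < c →
        completeH3 (t + 1) ({a, b, c} : Finset (Fin (t + 1))) := by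
      intro a b c hab hbc
      rw [completeH3]
      rw [Finset.card_insert_of_notMem, Finset.card_insert_of_notMem, Finset.card_singleton]
      · simp only [Finset.mem_singleton]
        exact fun h => absurd (h ▸ hbc) (lt_irrefl _)
      · simp only [Finset.mem_insert, Finset.mem_singleton]
        push_neg
        constructor
        · exact fun h => absurd (h ▸ hab) (lt_irrefl _)
        · exact fun h => absurd (h ▸ (hab.trans hbc)) (lt_irrefl _)
    have l01 : (⟨0, by omega⟩ : Fin (t+1)) < ⟨1, h1t⟩ := by rw [Fin.lt_def]; norm_num
    have l12 : (⟨1, h1t⟩ : Fin (t+1)) < ⟨2, h2t⟩ := by rw [Fin.lt_def]; norm_num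
    have l23 : (⟨2, h2t⟩ : Fin (t+1)) < ⟨3, h3t⟩ := by rw [Fin.lt_def]; norm_num
    have c1 := hred {⟨0, by omega⟩, ⟨1, h1t⟩, ⟨3, h3t⟩} (hcard _ _ _ l01 (l12.trans l23))
    have c2 := hred {⟨0, by omega⟩, ⟨2, h2t⟩, ⟨3, h3t⟩} (hcard _ _ _ (l01.trans l12) l23)
    have c3 := hred {⟨1, h1t⟩, ⟨2, h2t⟩, ⟨3, h3t⟩} (hcard _ _ _ l12 l23)
    rw [image3] at c1 c2 c3
    have c1' : col (({f ⟨0, by omega⟩, f ⟨1, h1t⟩, f ⟨3, h3t⟩} : Finset (Fin N')).image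
        (Fin.castLE hle)) = true := c1
    have c2' : col (({f ⟨0, by omega⟩, f ⟨2, h2t⟩, f ⟨3, h3t⟩} : Finset (Fin N')).image
        (Fin.castLE hle)) = true := c2
    have c3' : col (({f ⟨1, h1t⟩, f ⟨2, h2t⟩, f ⟨3, h3t⟩} : Finset (Fin N')).image
        (Fin.castLE hle)) = true := c3
    rw [image3] at c1' c2' c3'
    have hFlt : ∀ i j : Fin (t + 1), i < j →
        Fin.castLE hle (f i) < Fin.castLE hle (f j) := by
      intro i j hij
      have := hf hij
      rw [Fin.lt_def] at this ⊢
      exact this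
    exact hP1 (Fin.castLE hle (f ⟨0, by omega⟩)) (Fin.castLE hle (f ⟨1, h1t⟩))
      (Fin.castLE hle (f ⟨2, h2t⟩)) (Fin.castLE hle (f ⟨3, h3t⟩))
      (hFlt _ _ l01) (hFlt _ _ l12) (hFlt _ _ l23) ⟨c1', c2', c3'⟩
  · rintro ⟨g, hg, hblue⟩
    have hGlt : ∀ i j : Fin (3 * n), i < j →
        Fin.castLE hle (g i) < Fin.castLE hle (g j) := by
      intro i j hij
      have := hg hij
      rw [Fin.lt_def] at this ⊢
      exact this
    have hGinj : ∀ i j : Fin (3 * n),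
        Fin.castLE hle (g i) = Fin.castLE hle (g j) → i = j := by
      intro i j hij
      have h1 : g i = g j := by
        have := congrArg Fin.val hij
        exact Fin.ext this
      exact hg.injective h1
    set G : Fin (3 * n) → Fin (n ^ (n / 100)) := fun i => Fin.castLE hle (g i) with hG
    have hmk : ∀ i : ℕ, i ∈ Finset.range (3 * n) → i < 3 * n := fun i hi => Finset.mem_range.1 hi
    set A : Finset (Fin (n ^ (n / 100))) :=
      (Finset.range n).attach.image (fun i => G ⟨i.1, by have := Finset.mem_range.1 i.2; omega⟩)
      with hA
    set Bs : Finset (Fin (n ^ (n / 100))) :=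
      (Finset.range n).attach.image (fun i => G ⟨n + i.1, by have := Finset.mem_range.1 i.2; omega⟩)
      with hBs
    set C3 : Finset (Fin (n ^ (n / 100))) :=
      (Finset.range n).attach.image
        (fun i => G ⟨2 * n + i.1, by have := Finset.mem_range.1 i.2; omega⟩)
      with hC3
    have cardA : A.card = n := by
      rw [hA, Finset.card_image_of_injOn, Finset.card_attach, Finset.card_range]
      intro i _ j _ hij
      have := hGinj _ _ hij
      have h2 : i.1 = j.1 := by
        have := congrArg Fin.val this
        simpa using this
      exact Subtype.ext h2
    have cardB : Bs.card = n := by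
      rw [hBs, Finset.card_image_of_injOn, Finset.card_attach, Finset.card_range]
      intro i _ j _ hij
      have := hGinj _ _ hij
      have h2 : i.1 = j.1 := by
        have := congrArg Fin.val this
        simpa using this
      exact Subtype.ext h2
    have cardC : C3.card = n := by
      rw [hC3, Finset.card_image_of_injOn, Finset.card_attach, Finset.card_range]
      intro i _ j _ hij
      have := hGinj _ _ hij
      have h2 : i.1 = j.1 := by
        have := congrArg Fin.val this
        simpa using this
      exact Subtype.ext h2
    obtain ⟨cc, hcc, a, ha, b, hb, himp⟩ := hP2 A Bs C3 cardA cardB cardC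
    rw [hA, Finset.mem_image] at ha
    obtain ⟨ia, _, rfl⟩ := ha
    rw [hBs, Finset.mem_image] at hb
    obtain ⟨jb, _, rfl⟩ := hb
    rw [hC3, Finset.mem_image] at hcc
    obtain ⟨kc, _, rfl⟩ := hcc
    have hian : ia.1 < n := Finset.mem_range.1 ia.2
    have hjbn : jb.1 < n := Finset.mem_range.1 jb.2
    have hkcn : kc.1 < n := Finset.mem_range.1 kc.2
    have hab : G ⟨ia.1, by omega⟩ < G ⟨n + jb.1, by omega⟩ := by
      apply hGlt
      rw [Fin.lt_def]
      simp only
      omega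
    have hbc : G ⟨n + jb.1, by omega⟩ < G ⟨2 * n + kc.1, by omega⟩ := by
      apply hGlt
      rw [Fin.lt_def]
      simp only
      omega
    have hcoltrue := himp hab hbc
    have hK : K33 n ({⟨ia.1, by omega⟩, ⟨n + jb.1, by omega⟩, ⟨2 * n + kc.1, by omega⟩} :
        Finset (Fin (3 * n))) := by
      refine ⟨⟨ia.1, by omega⟩, ⟨n + jb.1, by omega⟩, ⟨2 * n + kc.1, by omega⟩, ?_, ?_, ?_, ?_, rfl⟩
      · simpa using hian
      · simp
      · simp only; omega
      · simp
    have hbl := hblue _ hK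
    rw [image3] at hbl
    have hbl' : col (({g ⟨ia.1, by omega⟩, g ⟨n + jb.1, by omega⟩, g ⟨2 * n + kc.1, by omega⟩} :
        Finset (Fin N')).image (Fin.castLE hle)) = false := hbl
    rw [image3] at hbl'
    have : (false : Bool) = true := by
      rw [← hbl']
      exact hcoltrue.symm ▸ rfl
    exact absurd this (by simp)

end final

theorem stmt14 (t : ℕ) (ht : 3 ≤ t) :
    ∃ c : ℝ, 0 < c ∧ ∃ n₀ : ℕ, ∀ n : ℕ, n₀ ≤ n →
      (2 : ℝ) ^ (c * n * Real.logb 2 n) ≤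
        (ordRamseyH (completeH3 (t + 1)) (K33 n) : ℝ) := by
  refine ⟨1 / 200, by norm_num, 2 ^ 801, ?_⟩
  intro n hn
  have hn200 : 200 ≤ n := le_trans (le_trans (by norm_num : (200 : ℕ) ≤ 2 ^ 8) (Nat.pow_le_pow_right (by norm_num) (by norm_num))) hn
  set S : Set ℕ := {N | ∀ c : Finset (Fin N) → Bool,
    (∃ f : Fin (t + 1) → Fin N, StrictMono f ∧
      ∀ e, completeH3 (t + 1) e → c (e.image f) = true) ∨
    (∃ g : Fin (3 * n) → Fin N, StrictMono g ∧
      ∀ e, K33 n e → c (e.image g) = false)} with hS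
  have hRdef : ordRamseyH (completeH3 (t + 1)) (K33 n) = sInf S := rfl
  obtain ⟨N0, hN0⟩ := exists_mem_ordSet t n
  have hne : S.Nonempty := ⟨N0, hN0⟩
  have hmemInf : sInf S ∈ S := Nat.sInf_mem hne
  have hgt : n ^ (n / 100) < sInf S := by
    by_contra hc
    push_neg at hc
    obtain ⟨c, hc1, hc2⟩ := construction_blocks t n ht hn (sInf S) hc
    rcases hmemInf c with h | h
    · exact hc1 h
    · exact hc2 h
  -- real arithmetic
  have hn0 : (0 : ℝ) < n := by positivity
  have hn1 : (1 : ℝ) ≤ n := by exact_mod_cast (by omega : 1 ≤ n)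
  have e1 : (1 / 200 : ℝ) * n * Real.logb 2 n = Real.logb 2 n * ((1 / 200) * n) := by ring
  rw [e1, Real.rpow_mul (by norm_num : (0 : ℝ) ≤ 2),
    Real.rpow_logb (by norm_num) (by norm_num) hn0]
  have hexp : (1 / 200 : ℝ) * n ≤ ((n / 100 : ℕ) : ℝ) := by
    have hnat : n ≤ 200 * (n / 100) := by omega
    have hcast : (n : ℝ) ≤ 200 * ((n / 100 : ℕ) : ℝ) := by exact_mod_cast hnat
    linarith
  calc (n : ℝ) ^ ((1 / 200 : ℝ) * n)
      ≤ (n : ℝ) ^ (((n / 100 : ℕ) : ℕ) : ℝ) := Real.rpow_le_rpow_of_exponent_le hn1 hexp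
    _ = ((n ^ (n / 100) : ℕ) : ℝ) := by
        rw [Real.rpow_natCast]
        push_cast
        ring
    _ ≤ ((ordRamseyH (completeH3 (t + 1)) (K33 n) : ℕ) : ℝ) := by
        rw [hRdef]
        exact_mod_cast le_of_lt hgt
end
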